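/- arXiv:1905.11273 — 5 statements merged into one kernel-verified Lean document; each statement's English description precedes it below -/
import Mathlib

section
/- The zero double bracket is the unique B-linear double quasi-Poisson bracket on kQ₁: every B-linear double bracket on kQ₁ is identically zero, and the zero double bracket satisfies the quasi-Poisson identity over B. -/
open TensorProduct

/-- A double bracket on a `k`-algebra `A` (Van den Bergh): a bilinear map
`A × A → A ⊗ A` which is cyclically antisymmetric and a derivation in its second
argument for the outer bimodule structure on `A ⊗ A`. -/
structure DoubleBracket (k A : Type*) [CommRing k] [Ring A] [Algebra k A] where
  br : A →ₗ[k] A →ₗ[k] A ⊗[k] A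
  antisymm : ∀ a b : A, br a b = - (TensorProduct.comm k A A) (br b a)
  deriv : ∀ a b c : A,
    br a (b * c) = br a b * ((1 : A) ⊗ₜ[k] c) + (b ⊗ₜ[k] (1 : A)) * br a c

section Core

variable (k : Type*) [CommRing k] (A : Type*) [Ring A] [Algebra k A]

/-- The cyclic permutation `x ⊗ y ⊗ z ↦ z ⊗ x ⊗ y` on the triple tensor product. -/
noncomputable def cyc3 : A ⊗[k] (A ⊗[k] A) ≃ₗ[k] A ⊗[k] (A ⊗[k] A) :=
  (TensorProduct.assoc k A A A).symm.trans (TensorProduct.comm k (A ⊗[k] A) A)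

variable {k A}

/-- Apply a double bracket (as a bilinear map) to the first tensor factor,
`x ⊗ y ↦ ⟪a, x⟫ ⊗ y`. -/
noncomputable def leftExtOf (br : A →ₗ[k] A →ₗ[k] A ⊗[k] A) (a : A) :
    A ⊗[k] A →ₗ[k] A ⊗[k] (A ⊗[k] A) :=
  (TensorProduct.assoc k A A A).toLinearMap.comp (TensorProduct.map (br a) LinearMap.id)

/-- The triple bracket associated to (the underlying bilinear map of) a double bracket:
`⟪a,b,c⟫ = ⟪a,⟪b,c⟫'⟫ ⊗ ⟪b,c⟫'' + τ(⟪b,⟪c,a⟫'⟫ ⊗ ⟪c,a⟫'') + τ²(⟪c,⟪a,b⟫'⟫ ⊗ ⟪a,b⟫'')`. -/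
noncomputable def tripleOf (br : A →ₗ[k] A →ₗ[k] A ⊗[k] A) (a b c : A) :
    A ⊗[k] (A ⊗[k] A) :=
  leftExtOf br a (br b c) + cyc3 k A (leftExtOf br b (br c a))
    + cyc3 k A (cyc3 k A (leftExtOf br c (br a b)))

/-- The triple bracket associated to a double bracket. -/
noncomputable def DoubleBracket.triple (D : DoubleBracket k A) (a b c : A) :
    A ⊗[k] (A ⊗[k] A) :=
  tripleOf D.br a b c

end Core

/-- A double bracket is quasi-Poisson over the ground field `k` (i.e. with respect to
the trivial idempotent decomposition `1 = 1`). -/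
def DoubleBracket.IsQuasiPoisson {k A : Type*} [Field k] [Ring A] [Algebra k A]
    (D : DoubleBracket k A) : Prop :=
  ∀ a b c : A, D.triple a b c = (4⁻¹ : k) •
    ((c * a) ⊗ₜ[k] (b ⊗ₜ[k] (1 : A)) - (c * a) ⊗ₜ[k] ((1 : A) ⊗ₜ[k] b)
      - c ⊗ₜ[k] ((a * b) ⊗ₜ[k] (1 : A)) + c ⊗ₜ[k] (a ⊗ₜ[k] b)
      - a ⊗ₜ[k] (b ⊗ₜ[k] c) + a ⊗ₜ[k] ((1 : A) ⊗ₜ[k] (b * c))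
      + (1 : A) ⊗ₜ[k] ((a * b) ⊗ₜ[k] c) - (1 : A) ⊗ₜ[k] (a ⊗ₜ[k] (b * c)))

/-- quasi-Poisson with respect to a finite family of orthogonal idempotents
`e : I → A` (spanning `B = ⊕ₛ k eₛ`). -/
def DoubleBracket.IsQuasiPoissonOver {k A : Type*} [Field k] [Ring A] [Algebra k A]
    {I : Type*} [Fintype I] (e : I → A) (D : DoubleBracket k A) : Prop :=
  ∀ a b c : A, D.triple a b c = (4⁻¹ : k) • ∑ s : I,
    ((c * e s * a) ⊗ₜ[k] ((e s * b) ⊗ₜ[k] (e s))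
      - (c * e s * a) ⊗ₜ[k] ((e s) ⊗ₜ[k] (b * e s))
      - (c * e s) ⊗ₜ[k] ((a * e s * b) ⊗ₜ[k] (e s))
      + (c * e s) ⊗ₜ[k] ((a * e s) ⊗ₜ[k] (b * e s))
      - (e s * a) ⊗ₜ[k] ((e s * b) ⊗ₜ[k] (e s * c))
      + (e s * a) ⊗ₜ[k] ((e s) ⊗ₜ[k] (b * e s * c))
      + (e s) ⊗ₜ[k] ((a * e s * b) ⊗ₜ[k] (e s * c))
      - (e s) ⊗ₜ[k] ((a * e s) ⊗ₜ[k] (b * e s * c)))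

/-- On the path algebra `kQ₁` of the quiver `1 → 2` (presented
abstractly: `A` is spanned by `e₁, e₂, t` with the path-algebra relations), every
`B`-linear double bracket vanishes identically, and the zero double bracket is
quasi-Poisson over `B = k e₁ ⊕ k e₂`. -/
theorem statement3 (k A : Type*) [Field k] [CharZero k] [Ring A] [Algebra k A]
    (e₁ e₂ t : A)
    (he₁ : e₁ * e₁ = e₁) (he₂ : e₂ * e₂ = e₂)
    (he₁₂ : e₁ * e₂ = 0) (he₂₁ : e₂ * e₁ = 0) (hsum : e₁ + e₂ = 1)
    (ht₁ : e₁ * t = t) (ht₂ : t * e₂ = t)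
    (ht₃ : t * e₁ = 0) (ht₄ : e₂ * t = 0) (ht₅ : t * t = 0)
    (hspan : ∀ a : A, ∃ c₁ c₂ c₃ : k, a = c₁ • e₁ + c₂ • e₂ + c₃ • t) :
    (∀ D : DoubleBracket k A,
      (∀ a : A, D.br e₁ a = 0 ∧ D.br e₂ a = 0 ∧ D.br a e₁ = 0 ∧ D.br a e₂ = 0) →
        ∀ a b : A, D.br a b = 0) ∧
    (∀ D : DoubleBracket k A, (∀ a b : A, D.br a b = 0) →
      D.IsQuasiPoissonOver ![e₁, e₂]) := by
  classical
  constructor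
  · -- Part 1: every B-linear double bracket vanishes
    intro D hB
    have hb1 : ∀ x : A, D.br e₁ x = 0 := fun x => (hB x).1
    have hb2 : ∀ x : A, D.br e₂ x = 0 := fun x => (hB x).2.1
    have hb3 : ∀ x : A, D.br x e₁ = 0 := fun x => (hB x).2.2.1
    have hb4 : ∀ x : A, D.br x e₂ = 0 := fun x => (hB x).2.2.2
    -- `comm` is multiplicative
    have hcm : ∀ x y : A ⊗[k] A, (TensorProduct.comm k A A) (x * y)
        = (TensorProduct.comm k A A) x * (TensorProduct.comm k A A) y := by
      intro x y
      induction x using TensorProduct.induction_on with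
      | zero => simp
      | tmul u v =>
        induction y using TensorProduct.induction_on with
        | zero => simp
        | tmul p q => simp [Algebra.TensorProduct.tmul_mul_tmul]
        | add y1 y2 h1 h2 => simp only [mul_add, map_add, h1, h2]
      | add x1 x2 h1 h2 => simp only [add_mul, map_add, h1, h2]
    have hcol : ∀ u : A, ∃ c : k, e₁ * u * e₂ = c • t := by
      intro u
      obtain ⟨c1, c2, c3, rfl⟩ := hspan u
      refine ⟨c3, ?_⟩
      simp [mul_add, add_mul, mul_smul_comm, smul_mul_assoc, he₁, he₂, he₁₂, he₂₁,
        ht₁, ht₂, ht₃, ht₄, ht₅]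
    have hspanTT : ∀ Y : A ⊗[k] A, ∃ c : k,
        ((1:A) ⊗ₜ[k] e₁) * ((e₁ ⊗ₜ[k] (1:A)) * Y * ((1:A) ⊗ₜ[k] e₂)) * (e₂ ⊗ₜ[k] (1:A))
          = c • (t ⊗ₜ[k] t) := by
      intro Y
      induction Y using TensorProduct.induction_on with
      | zero => exact ⟨0, by simp⟩
      | tmul u v =>
        obtain ⟨c, hc⟩ := hcol u
        obtain ⟨d, hd⟩ := hcol v
        refine ⟨c * d, ?_⟩
        simp only [Algebra.TensorProduct.tmul_mul_tmul, one_mul, mul_one]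
        rw [← mul_assoc e₁ v e₂, hc, hd, ← TensorProduct.smul_tmul', tmul_smul, smul_smul]
      | add y1 y2 h1 h2 =>
        obtain ⟨c, hc⟩ := h1
        obtain ⟨d, hd⟩ := h2
        exact ⟨c + d, by rw [mul_add, add_mul, mul_add, add_mul, hc, hd, add_smul]⟩
    set X := D.br t t with hXdef
    have h1 : X = (e₁ ⊗ₜ[k] (1:A)) * X := by
      have h := D.deriv t e₁ t
      rw [ht₁, hb3 t] at h
      simpa using h
    have h2 : X = X * ((1:A) ⊗ₜ[k] e₂) := by
      have h := D.deriv t t e₂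
      rw [ht₂, hb4 t] at h
      simpa using h
    have h12 : X = (e₁ ⊗ₜ[k] (1:A)) * X * ((1:A) ⊗ₜ[k] e₂) := by
      rw [mul_assoc, ← h2, ← h1]
    have hcX : (TensorProduct.comm k A A) X = -X := by
      have h := D.antisymm t t
      rw [← hXdef] at h
      rw [← neg_neg ((TensorProduct.comm k A A) X), ← h]
    have h3 : X = ((1:A) ⊗ₜ[k] e₁) * X * (e₂ ⊗ₜ[k] (1:A)) := by
      have h := congrArg (TensorProduct.comm k A A) h12
      rw [hcm, hcm] at h
      simp only [TensorProduct.comm_tmul, hcX] at h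
      rw [mul_neg, neg_mul, neg_inj] at h
      exact h
    obtain ⟨c, hc⟩ := hspanTT X
    have hXc : X = c • (t ⊗ₜ[k] t) := by
      have hX' : X = ((1:A) ⊗ₜ[k] e₁) * ((e₁ ⊗ₜ[k] (1:A)) * X * ((1:A) ⊗ₜ[k] e₂))
          * (e₂ ⊗ₜ[k] (1:A)) := by
        rw [← h12]; exact h3
      rw [hX', hc]
    have hself : X = -X := by
      have h := hcX
      rw [hXc, map_smul, TensorProduct.comm_tmul] at h
      rw [hXc]
      exact h
    have htt : X = 0 := by
      have h2X : (2 : k) • X = 0 := by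
        rw [two_smul]
        nth_rewrite 2 [hself]
        exact add_neg_cancel X
      rcases smul_eq_zero.mp h2X with h | h
      · exact absurd h two_ne_zero
      · exact h
    intro a b
    obtain ⟨a1, a2, a3, rfl⟩ := hspan a
    obtain ⟨b1, b2, b3, rfl⟩ := hspan b
    simp only [map_add, map_smul, LinearMap.add_apply, LinearMap.smul_apply,
      hb1, hb2, hb3, hb4]
    rw [← hXdef, htt]
    simp
  · -- Part 2: the zero bracket is quasi-Poisson over B
    intro D hz a b c
    have h0 : D.triple a b c = 0 := by
      simp [DoubleBracket.triple, tripleOf, hz]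
    rw [h0]
    have hsum0 : (∑ s : Fin 2,
        ((c * (![e₁, e₂]) s * a) ⊗ₜ[k] (((![e₁, e₂]) s * b) ⊗ₜ[k] ((![e₁, e₂]) s))
          - (c * (![e₁, e₂]) s * a) ⊗ₜ[k] (((![e₁, e₂]) s) ⊗ₜ[k] (b * (![e₁, e₂]) s))
          - (c * (![e₁, e₂]) s) ⊗ₜ[k] ((a * (![e₁, e₂]) s * b) ⊗ₜ[k] ((![e₁, e₂]) s))
          + (c * (![e₁, e₂]) s) ⊗ₜ[k] ((a * (![e₁, e₂]) s) ⊗ₜ[k] (b * (![e₁, e₂]) s))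
          - ((![e₁, e₂]) s * a) ⊗ₜ[k] (((![e₁, e₂]) s * b) ⊗ₜ[k] ((![e₁, e₂]) s * c))
          + ((![e₁, e₂]) s * a) ⊗ₜ[k] (((![e₁, e₂]) s) ⊗ₜ[k] (b * (![e₁, e₂]) s * c))
          + ((![e₁, e₂]) s) ⊗ₜ[k] ((a * (![e₁, e₂]) s * b) ⊗ₜ[k] ((![e₁, e₂]) s * c))
          - ((![e₁, e₂]) s) ⊗ₜ[k] ((a * (![e₁, e₂]) s) ⊗ₜ[k] (b * (![e₁, e₂]) s * c)))) = 0 := by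
      rw [Fin.sum_univ_two]
      simp only [Matrix.cons_val_zero, Matrix.cons_val_one, Matrix.head_cons]
      obtain ⟨a1, a2, a3, rfl⟩ := hspan a
      obtain ⟨b1, b2, b3, rfl⟩ := hspan b
      obtain ⟨c1, c2, c3, rfl⟩ := hspan c
      simp only [mul_add, add_mul, smul_mul_assoc, mul_smul_comm, smul_smul,
        he₁, he₂, he₁₂, he₂₁, ht₁, ht₂, ht₃, ht₄, ht₅,
        smul_zero, zero_smul, mul_zero, zero_mul, add_zero, zero_add,
        tmul_add, add_tmul, ← TensorProduct.smul_tmul', tmul_smul,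
        zero_tmul, tmul_zero]
      module
    rw [hsum0, smul_zero]
end

section
/- Every element of the fusion algebra A^f can be written as a sum of products of elements of the following four types: first type t with t ∈ εAε; second type e₁₂u with u ∈ e₂Aε; third type ve₂₁ with v ∈ εAe₂; and fourth type e₁₂we₂₁ with w ∈ e₂Ae₂. In other words, A^f is generated as a k-algebra by these elements. -/
open TensorProduct

section Fusion

variable (k : Type*) [Field k] (A : Type*) [Ring A] [Algebra k A]

/-- Relations presenting the extension algebra `Ā = A *_B B̄`, where `B̄ = Mat₂(k) ⊕ kμ`:
`Ā` is generated by the elements of `A` together with two new generators `e₁₂, e₂₁`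
subject to `e₁₂e₂₁ = e₁`, `e₂₁e₁₂ = e₂`, `e₁e₁₂ = e₁₂ = e₁₂e₂`, `e₂e₂₁ = e₂₁ = e₂₁e₁`. -/
inductive FusionRel (e1 e2 : A) :
    FreeAlgebra k (A ⊕ Fin 2) → FreeAlgebra k (A ⊕ Fin 2) → Prop
  | add (a b : A) : FusionRel e1 e2
      (FreeAlgebra.ι k (Sum.inl a) + FreeAlgebra.ι k (Sum.inl b))
      (FreeAlgebra.ι k (Sum.inl (a + b)))
  | smul (c : k) (a : A) : FusionRel e1 e2
      (c • FreeAlgebra.ι k (Sum.inl a)) (FreeAlgebra.ι k (Sum.inl (c • a)))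
  | mul (a b : A) : FusionRel e1 e2
      (FreeAlgebra.ι k (Sum.inl a) * FreeAlgebra.ι k (Sum.inl b))
      (FreeAlgebra.ι k (Sum.inl (a * b)))
  | one : FusionRel e1 e2 (FreeAlgebra.ι k (Sum.inl 1)) 1
  | mul1221 : FusionRel e1 e2
      (FreeAlgebra.ι k (Sum.inr 0) * FreeAlgebra.ι k (Sum.inr 1))
      (FreeAlgebra.ι k (Sum.inl e1))
  | mul2112 : FusionRel e1 e2
      (FreeAlgebra.ι k (Sum.inr 1) * FreeAlgebra.ι k (Sum.inr 0))
      (FreeAlgebra.ι k (Sum.inl e2))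
  | e1mul12 : FusionRel e1 e2
      (FreeAlgebra.ι k (Sum.inl e1) * FreeAlgebra.ι k (Sum.inr 0))
      (FreeAlgebra.ι k (Sum.inr 0))
  | mul12e2 : FusionRel e1 e2
      (FreeAlgebra.ι k (Sum.inr 0) * FreeAlgebra.ι k (Sum.inl e2))
      (FreeAlgebra.ι k (Sum.inr 0))
  | e2mul21 : FusionRel e1 e2
      (FreeAlgebra.ι k (Sum.inl e2) * FreeAlgebra.ι k (Sum.inr 1))
      (FreeAlgebra.ι k (Sum.inr 1))
  | mul21e1 : FusionRel e1 e2
      (FreeAlgebra.ι k (Sum.inr 1) * FreeAlgebra.ι k (Sum.inl e1))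
      (FreeAlgebra.ι k (Sum.inr 1))

/-- The extension algebra `Ā = A *_B B̄` of `A` along the pair of idempotents
`(e1, e2)`. -/
abbrev ExtAlg (e1 e2 : A) := RingQuot (FusionRel k A e1 e2)

variable (e1 e2 : A)

/-- The canonical map `A → Ā`. -/
noncomputable def extι : A →ₐ[k] ExtAlg k A e1 e2 where
  toFun a := RingQuot.mkAlgHom k (FusionRel k A e1 e2) (FreeAlgebra.ι k (Sum.inl a))
  map_one' := by
    simpa using RingQuot.mkAlgHom_rel k
      (FusionRel.one (k := k) (A := A) (e1 := e1) (e2 := e2))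
  map_mul' a b := by
    have h := RingQuot.mkAlgHom_rel k
      (FusionRel.mul (k := k) (A := A) (e1 := e1) (e2 := e2) a b)
    rw [map_mul] at h
    exact h.symm
  map_zero' := by
    have h := RingQuot.mkAlgHom_rel k
      (FusionRel.smul (k := k) (A := A) (e1 := e1) (e2 := e2) 0 1)
    rw [map_smul, zero_smul, zero_smul] at h
    exact h.symm
  map_add' a b := by
    have h := RingQuot.mkAlgHom_rel k
      (FusionRel.add (k := k) (A := A) (e1 := e1) (e2 := e2) a b)
    rw [map_add] at h
    exact h.symm
  commutes' c := by
    have h := RingQuot.mkAlgHom_rel k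
      (FusionRel.smul (k := k) (A := A) (e1 := e1) (e2 := e2) c 1)
    have h1 : (RingQuot.mkAlgHom k (FusionRel k A e1 e2))
        (FreeAlgebra.ι k (Sum.inl (1 : A))) = 1 := by
      simpa using RingQuot.mkAlgHom_rel k
        (FusionRel.one (k := k) (A := A) (e1 := e1) (e2 := e2))
    rw [map_smul, h1] at h
    rw [Algebra.algebraMap_eq_smul_one, Algebra.algebraMap_eq_smul_one]
    exact h.symm

/-- The matrix unit `e₁₂ ∈ Ā`. -/
noncomputable def ext12 : ExtAlg k A e1 e2 :=
  RingQuot.mkAlgHom k (FusionRel k A e1 e2) (FreeAlgebra.ι k (Sum.inr 0))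

/-- The matrix unit `e₂₁ ∈ Ā`. -/
noncomputable def ext21 : ExtAlg k A e1 e2 :=
  RingQuot.mkAlgHom k (FusionRel k A e1 e2) (FreeAlgebra.ι k (Sum.inr 1))

/-- The idempotent `ε = 1 − e₂ ∈ Ā`; the fusion algebra is the corner
`A^f = ε Ā ε`. -/
noncomputable def extEps : ExtAlg k A e1 e2 := 1 - extι k A e1 e2 e2

variable {k A e1 e2}

/-- Membership in the fusion algebra `A^f = ε Ā ε ⊆ Ā`. -/
def InCorner (x : ExtAlg k A e1 e2) : Prop :=
  extEps k A e1 e2 * x * extEps k A e1 e2 = x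

end Fusion

/-- The data of a double bracket on the corner algebra `A^f = ε Ā ε` (whose unit is
`ε`), recorded as a bilinear map on `Ā`: it is cyclically antisymmetric, satisfies the
derivation rule on corner elements, and takes corner values on corner elements. -/
structure CornerDoubleBracket (k R : Type*) [Field k] [Ring R] [Algebra k R]
    (ε : R) where
  br : R →ₗ[k] R →ₗ[k] R ⊗[k] R
  antisymm : ∀ a b : R, br a b = - (TensorProduct.comm k R R) (br b a)
  deriv : ∀ a b c : R, ε * a * ε = a → ε * b * ε = b → ε * c * ε = c →
    br a (b * c) = br a b * ((1 : R) ⊗ₜ[k] c) + (b ⊗ₜ[k] (1 : R)) * br a c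
  corner_val : ∀ a b : R, ε * a * ε = a → ε * b * ε = b →
    br a b = (ε ⊗ₜ[k] ε) * br a b * (ε ⊗ₜ[k] ε)

section FusionAux

variable {k : Type*} [Field k] {A : Type*} [Ring A] [Algebra k A] {e1 e2 : A}

lemma fusion_q_inl (a : A) :
    RingQuot.mkAlgHom k (FusionRel k A e1 e2) (FreeAlgebra.ι k (Sum.inl a)) =
      extι k A e1 e2 a := rfl

lemma fusion_r1221 : ext12 k A e1 e2 * ext21 k A e1 e2 = extι k A e1 e2 e1 := by
  have h := RingQuot.mkAlgHom_rel k
    (FusionRel.mul1221 (k := k) (A := A) (e1 := e1) (e2 := e2))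
  rw [map_mul] at h
  exact h

lemma fusion_r2112 : ext21 k A e1 e2 * ext12 k A e1 e2 = extι k A e1 e2 e2 := by
  have h := RingQuot.mkAlgHom_rel k
    (FusionRel.mul2112 (k := k) (A := A) (e1 := e1) (e2 := e2))
  rw [map_mul] at h
  exact h

lemma fusion_re112 : extι k A e1 e2 e1 * ext12 k A e1 e2 = ext12 k A e1 e2 := by
  have h := RingQuot.mkAlgHom_rel k
    (FusionRel.e1mul12 (k := k) (A := A) (e1 := e1) (e2 := e2))
  rw [map_mul] at h
  exact h

lemma fusion_r12e2 : ext12 k A e1 e2 * extι k A e1 e2 e2 = ext12 k A e1 e2 := by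
  have h := RingQuot.mkAlgHom_rel k
    (FusionRel.mul12e2 (k := k) (A := A) (e1 := e1) (e2 := e2))
  rw [map_mul] at h
  exact h

lemma fusion_re221 : extι k A e1 e2 e2 * ext21 k A e1 e2 = ext21 k A e1 e2 := by
  have h := RingQuot.mkAlgHom_rel k
    (FusionRel.e2mul21 (k := k) (A := A) (e1 := e1) (e2 := e2))
  rw [map_mul] at h
  exact h

lemma fusion_r21e1 : ext21 k A e1 e2 * extι k A e1 e2 e1 = ext21 k A e1 e2 := by
  have h := RingQuot.mkAlgHom_rel k
    (FusionRel.mul21e1 (k := k) (A := A) (e1 := e1) (e2 := e2))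
  rw [map_mul] at h
  exact h

/-- The core generation lemma, with abstract idempotent identities. -/
theorem fusion_gen (he2 : e2 * e2 = e2) (h12 : e1 * e2 = 0) (h21 : e2 * e1 = 0) :
    ∀ x : ExtAlg k A e1 e2, InCorner x →
      x ∈ NonUnitalAlgebra.adjoin k
        {y : ExtAlg k A e1 e2 |
          (∃ t : A, y = extEps k A e1 e2 * extι k A e1 e2 t * extEps k A e1 e2) ∨
          (∃ u : A, y = ext12 k A e1 e2 * extι k A e1 e2 u * extEps k A e1 e2) ∨
          (∃ v : A, y = extEps k A e1 e2 * extι k A e1 e2 v * ext21 k A e1 e2) ∨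
          (∃ w : A, y = ext12 k A e1 e2 * extι k A e1 e2 w * ext21 k A e1 e2)} := by
  intro x hx
  set ι' : A →ₐ[k] ExtAlg k A e1 e2 := extι k A e1 e2 with hι'
  set ε : ExtAlg k A e1 e2 := extEps k A e1 e2 with hε
  set E12 : ExtAlg k A e1 e2 := ext12 k A e1 e2 with hE12
  set E21 : ExtAlg k A e1 e2 := ext21 k A e1 e2 with hE21
  set q : FreeAlgebra k (A ⊕ Fin 2) →ₐ[k] ExtAlg k A e1 e2 :=
    RingQuot.mkAlgHom k (FusionRel k A e1 e2) with hq
  set S := NonUnitalAlgebra.adjoin k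
      {y : ExtAlg k A e1 e2 |
        (∃ t : A, y = ε * ι' t * ε) ∨ (∃ u : A, y = E12 * ι' u * ε) ∨
        (∃ v : A, y = ε * ι' v * E21) ∨ (∃ w : A, y = E12 * ι' w * E21)} with hS
  -- generator memberships
  have hT1 : ∀ t : A, ε * ι' t * ε ∈ S :=
    fun t => NonUnitalAlgebra.subset_adjoin k (Or.inl ⟨t, rfl⟩)
  have hT2 : ∀ u : A, E12 * ι' u * ε ∈ S :=
    fun u => NonUnitalAlgebra.subset_adjoin k (Or.inr (Or.inl ⟨u, rfl⟩))
  have hT3 : ∀ v : A, ε * ι' v * E21 ∈ S :=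
    fun v => NonUnitalAlgebra.subset_adjoin k (Or.inr (Or.inr (Or.inl ⟨v, rfl⟩)))
  have hT4 : ∀ w : A, E12 * ι' w * E21 ∈ S :=
    fun w => NonUnitalAlgebra.subset_adjoin k (Or.inr (Or.inr (Or.inr ⟨w, rfl⟩)))
  -- basic relations
  have f1221 : E12 * E21 = ι' e1 := fusion_r1221
  have f2112 : E21 * E12 = ι' e2 := fusion_r2112
  have fe112 : ι' e1 * E12 = E12 := fusion_re112
  have f12e2 : E12 * ι' e2 = E12 := fusion_r12e2
  have fe221 : ι' e2 * E21 = E21 := fusion_re221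
  have f21e1 : E21 * ι' e1 = E21 := fusion_r21e1
  have hεdef : ε = 1 - ι' e2 := rfl
  have hone : ε + ι' e2 = 1 := by rw [hεdef]; abel
  have hιe2sq : ι' e2 * ι' e2 = ι' e2 := by rw [← map_mul, he2]
  have hεsq : ε * ε = ε := by
    rw [hεdef, sub_mul, one_mul, mul_sub, mul_one, hιe2sq, sub_self, sub_zero]
  have h2_12 : ι' e2 * E12 = 0 := by
    rw [← fe112, ← mul_assoc, ← map_mul, h21, map_zero, zero_mul]
  have h21_2 : E21 * ι' e2 = 0 := by
    rw [← f21e1, mul_assoc, ← map_mul, h12, map_zero,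
      mul_zero]
  have h1_21 : ι' e1 * E21 = 0 := by
    rw [← fe221, ← mul_assoc, ← map_mul, h12, map_zero,
      zero_mul]
  have hε12 : ε * E12 = E12 := by
    rw [hεdef, sub_mul, one_mul, h2_12, sub_zero]
  have h21ε : E21 * ε = E21 := by
    rw [hεdef, mul_sub, mul_one, h21_2, sub_zero]
  have hε21 : ε * E21 = 0 := by
    rw [hεdef, sub_mul, one_mul, fe221, sub_self]
  have h12ε : E12 * ε = 0 := by
    rw [hεdef, mul_sub, mul_one, f12e2, sub_self]
  have h1ε : ι' e1 * ε = ι' e1 := by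
    rw [hεdef, mul_sub, mul_one, ← map_mul, h12, map_zero, sub_zero]
  have hε1 : ε * ι' e1 = ι' e1 := by
    rw [hεdef, sub_mul, one_mul, ← map_mul, h21, map_zero, sub_zero]
  have h1212 : E12 * E12 = 0 := by
    have h : E12 * (ι' e2 * E12) = 0 := by rw [h2_12, mul_zero]
    rw [← h, ← mul_assoc, f12e2]
  -- the key induction over the free algebra
  have key : ∀ y : FreeAlgebra k (A ⊕ Fin 2),
      ε * q y * ε ∈ S ∧ E12 * q y * ε ∈ S ∧ ε * q y * E21 ∈ S ∧
        E12 * q y * E21 ∈ S := by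
    intro y
    induction y using FreeAlgebra.induction with
    | grade0 c =>
        have hc : ∀ L R : ExtAlg k A e1 e2,
            L * q (algebraMap k _ c) * R = c • (L * ι' (1 : A) * R) := by
          intro L R
          rw [AlgHom.commutes, map_one, mul_one, Algebra.algebraMap_eq_smul_one,
            mul_smul_comm, smul_mul_assoc, mul_one]
        exact ⟨by rw [hc]; exact SMulMemClass.smul_mem c (hT1 1),
          by rw [hc]; exact SMulMemClass.smul_mem c (hT2 1),
          by rw [hc]; exact SMulMemClass.smul_mem c (hT3 1),
          by rw [hc]; exact SMulMemClass.smul_mem c (hT4 1)⟩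
    | grade1 z =>
        rcases z with a | i
        · have hz : q (FreeAlgebra.ι k (Sum.inl a)) = ι' a := rfl
          rw [hz]
          exact ⟨hT1 a, hT2 a, hT3 a, hT4 a⟩
        · have hιe1 : ι' e1 ∈ S := by
            have h : ε * ι' e1 * ε = ι' e1 := by rw [hε1, h1ε]
            exact h ▸ hT1 e1
          fin_cases i <;> simp only [Fin.zero_eta, Fin.mk_one]
          · have hz : q (FreeAlgebra.ι k (Sum.inr 0)) = E12 := rfl
            rw [hz]
            refine ⟨?_, ?_, ?_, ?_⟩
            · rw [hε12, h12ε]; exact zero_mem S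
            · rw [h1212, zero_mul]; exact zero_mem S
            · rw [hε12, f1221]; exact hιe1
            · rw [h1212, zero_mul]; exact zero_mem S
          · have hz : q (FreeAlgebra.ι k (Sum.inr 1)) = E21 := rfl
            rw [hz]
            refine ⟨?_, ?_, ?_, ?_⟩
            · rw [hε21, zero_mul]; exact zero_mem S
            · rw [f1221, h1ε]; exact hιe1
            · rw [hε21, zero_mul]; exact zero_mem S
            · rw [f1221, h1_21]; exact zero_mem S
    | mul a b ha hb =>
        have hsplit : ∀ L R : ExtAlg k A e1 e2,
            L * q (a * b) * R
              = (L * q a * ε) * (ε * q b * R) + (L * q a * E21) * (E12 * q b * R) := by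
          intro L R
          rw [map_mul]
          calc L * (q a * q b) * R
              = (L * q a * (ε + ι' e2)) * (q b * R) := by rw [hone, mul_one]; noncomm_ring
            _ = (L * q a * ε + L * q a * ι' e2) * (q b * R) := by rw [mul_add]
            _ = (L * q a * (ε * ε)) * (q b * R)
                  + (L * q a * (E21 * E12)) * (q b * R) := by
                rw [hεsq, f2112, add_mul]
            _ = (L * q a * ε) * (ε * q b * R) + (L * q a * E21) * (E12 * q b * R) := by
                noncomm_ring
        refine ⟨?_, ?_, ?_, ?_⟩
        · rw [hsplit]; exact add_mem (mul_mem ha.1 hb.1) (mul_mem ha.2.2.1 hb.2.1)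
        · rw [hsplit]; exact add_mem (mul_mem ha.2.1 hb.1) (mul_mem ha.2.2.2 hb.2.1)
        · rw [hsplit]; exact add_mem (mul_mem ha.1 hb.2.2.1) (mul_mem ha.2.2.1 hb.2.2.2)
        · rw [hsplit]; exact add_mem (mul_mem ha.2.1 hb.2.2.1) (mul_mem ha.2.2.2 hb.2.2.2)
    | add a b ha hb =>
        have hadd : ∀ L R : ExtAlg k A e1 e2,
            L * q (a + b) * R = L * q a * R + L * q b * R := by
          intro L R
          rw [map_add, mul_add, add_mul]
        exact ⟨by rw [hadd]; exact add_mem ha.1 hb.1,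
          by rw [hadd]; exact add_mem ha.2.1 hb.2.1,
          by rw [hadd]; exact add_mem ha.2.2.1 hb.2.2.1,
          by rw [hadd]; exact add_mem ha.2.2.2 hb.2.2.2⟩
  obtain ⟨y, hy⟩ := RingQuot.mkAlgHom_surjective k (FusionRel k A e1 e2) x
  have hmem := (key y).1
  rw [show q y = x from hy] at hmem
  rw [← hx]
  exact hmem

end FusionAux

/-- Every element of the fusion algebra `A^f = εĀε` lies in the
(non-unital) subalgebra generated by the elements of the four types:
`ε ι(t) ε` (first type), `e₁₂ ι(u) ε` (second type), `ε ι(v) e₂₁` (third type) and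
`e₁₂ ι(w) e₂₁` (fourth type). -/
theorem statement8 (k : Type*) [Field k] [CharZero k]
    (A : Type*) [Ring A] [Algebra k A]
    (I : Type*) [Fintype I] [DecidableEq I] (e : I → A)
    (horth : ∀ s t : I, e s * e t = if s = t then e s else 0)
    (hsum : ∑ s : I, e s = 1)
    (i1 i2 : I) (h12 : i1 ≠ i2) :
    ∀ x : ExtAlg k A (e i1) (e i2), InCorner x →
      x ∈ NonUnitalAlgebra.adjoin k
        {y : ExtAlg k A (e i1) (e i2) |
          (∃ t : A, y = extEps k A (e i1) (e i2) * extι k A (e i1) (e i2) t *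
              extEps k A (e i1) (e i2)) ∨
          (∃ u : A, y = ext12 k A (e i1) (e i2) * extι k A (e i1) (e i2) u *
              extEps k A (e i1) (e i2)) ∨
          (∃ v : A, y = extEps k A (e i1) (e i2) * extι k A (e i1) (e i2) v *
              ext21 k A (e i1) (e i2)) ∨
          (∃ w : A, y = ext12 k A (e i1) (e i2) * extι k A (e i1) (e i2) w *
              ext21 k A (e i1) (e i2))} := by
  have he2 : e i2 * e i2 = e i2 := by rw [horth, if_pos rfl]
  have h12' : e i1 * e i2 = 0 := by rw [horth, if_neg h12]
  have h21' : e i2 * e i1 = 0 := by rw [horth, if_neg (Ne.symm h12)]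
  exact fusion_gen he2 h12' h21'
end

section
/- On the generators of the fusion algebra A^f, the double derivations Tr(E₁) and Tr(E₂) satisfy: for t ∈ εAε, Tr(E₁)(t) = te₁⊗e₁ − e₁⊗e₁t and Tr(E₂)(t) = 0; for u ∈ e₂Aε, Tr(E₁)(e₁₂u) = (e₁₂u)e₁⊗e₁ and Tr(E₂)(e₁₂u) = −e₁⊗(e₁₂u); for v ∈ εAe₂, Tr(E₁)(ve₂₁) = −e₁⊗e₁(ve₂₁) and Tr(E₂)(ve₂₁) = (ve₂₁)⊗e₁; for w ∈ e₂Ae₂, Tr(E₁)(e₁₂we₂₁) = 0 and Tr(E₂)(e₁₂we₂₁) = (e₁₂we₂₁)e₁⊗e₁ − e₁⊗e₁(e₁₂we₂₁). In particular, Tr(E₁) + Tr(E₂) = F₁, the gauge element of A^f at e₁. -/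
open TensorProduct

section GaugeTr

variable {k : Type*} [Field k] {A : Type*} [Ring A] [Algebra k A] {e1 e2 : A}

/-- The property of being (the extension to `Ā` of) the gauge element `E_s`: a double
derivation of `Ā` vanishing on `B̄` and given on `A` by
`E_s(a) = a e_s ⊗ e_s − e_s ⊗ e_s a`. -/
structure IsGaugeExt (es : A) (δ : ExtAlg k A e1 e2 →ₗ[k]
    ExtAlg k A e1 e2 ⊗[k] ExtAlg k A e1 e2) : Prop where
  leib : ∀ x y : ExtAlg k A e1 e2,
    δ (x * y) = δ x * ((1 : ExtAlg k A e1 e2) ⊗ₜ[k] y)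
      + (x ⊗ₜ[k] (1 : ExtAlg k A e1 e2)) * δ y
  on_A : ∀ a : A, δ (extι k A e1 e2 a) =
    (extι k A e1 e2 (a * es)) ⊗ₜ[k] (extι k A e1 e2 es)
      - (extι k A e1 e2 es) ⊗ₜ[k] (extι k A e1 e2 (es * a))
  on_e12 : δ (ext12 k A e1 e2) = 0
  on_e21 : δ (ext21 k A e1 e2) = 0

/-- The trace map on double derivations:
`Tr(δ)(a) = δ(a)'ε ⊗ εδ(a)'' + δ(a)'e₂₁ε ⊗ εe₁₂δ(a)''`. -/
noncomputable def TrOf (δ : ExtAlg k A e1 e2 →ₗ[k]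
    ExtAlg k A e1 e2 ⊗[k] ExtAlg k A e1 e2) :
    ExtAlg k A e1 e2 →ₗ[k] ExtAlg k A e1 e2 ⊗[k] ExtAlg k A e1 e2 :=
  (TensorProduct.map (LinearMap.mulRight k (extEps k A e1 e2))
      (LinearMap.mulLeft k (extEps k A e1 e2))).comp δ
    + (TensorProduct.map
        (LinearMap.mulRight k (ext21 k A e1 e2 * extEps k A e1 e2))
        (LinearMap.mulLeft k (extEps k A e1 e2 * ext12 k A e1 e2))).comp δ

end GaugeTr

/-!
`Tr` preserves double derivations, and each extended gauge element `E_s` kills `e₁₂` and `e₂₁`,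
so `Tr(E_s)(e₁₂ x e₂₁) = (e₁₂ ⊗ 1) Tr(E_s)(x) (1 ⊗ e₂₁)`: everything reduces to the values on
`A`. There the sandwiching by `ε` and by `e₂₁ ε ⊗ ε e₁₂` turns the inner double derivation
`x ↦ x e_s ⊗ e_s - e_s ⊗ e_s x` into the inner one attached to `(e_s ε, ε e_s)` plus the one
attached to `(e_s e₂₁, e₁₂ e_s)`; by the matrix-unit relations and orthogonality only `(e₁, e₁)`
survives for `s = 1` and only `(e₂₁, e₁₂)` for `s = 2`. Hence `Tr(E₁) + Tr(E₂)` agrees on the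
generators of `Ā`, and so everywhere, with `F₁` plus the inner double derivation of
`(e₂₁, e₁₂)`, and the latter vanishes on `εĀε` because `ε e₂₁ = 0 = e₁₂ ε`.
-/

section DoubleDeriv

variable {k : Type*} [CommRing k] {R : Type*} [Ring R] [Algebra k R]

def IsDoubleDeriv (δ : R →ₗ[k] R ⊗[k] R) : Prop :=
  ∀ x y : R, δ (x * y) = δ x * ((1 : R) ⊗ₜ[k] y) + (x ⊗ₜ[k] (1 : R)) * δ y

def innerDoubleDeriv (p q : R) : R →ₗ[k] R ⊗[k] R :=
  (TensorProduct.mk k R R).flip q ∘ₗ LinearMap.mulRight k p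
    - TensorProduct.mk k R R p ∘ₗ LinearMap.mulLeft k q

@[simp]
lemma innerDoubleDeriv_apply (p q x : R) :
    innerDoubleDeriv (k := k) p q x = (x * p) ⊗ₜ[k] q - p ⊗ₜ[k] (q * x) := rfl

lemma isDoubleDeriv_innerDoubleDeriv (p q : R) :
    IsDoubleDeriv (innerDoubleDeriv (k := k) p q) := by
  intro x y
  simp only [innerDoubleDeriv_apply, sub_mul, mul_sub,
    Algebra.TensorProduct.tmul_mul_tmul, one_mul, mul_one, mul_assoc]
  abel

lemma map_mulRight_mulLeft_comp_innerDoubleDeriv (c d p q : R) :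
    TensorProduct.map (LinearMap.mulRight k c) (LinearMap.mulLeft k d) ∘ₗ
      innerDoubleDeriv p q = innerDoubleDeriv (p * c) (d * q) := by
  ext x
  simp [mul_assoc]

lemma map_mulRight_mulLeft_mul (c d x y : R) (t : R ⊗[k] R) :
    TensorProduct.map (LinearMap.mulRight k c) (LinearMap.mulLeft k d)
      ((x ⊗ₜ[k] (1 : R)) * t * ((1 : R) ⊗ₜ[k] y)) =
    (x ⊗ₜ[k] (1 : R)) *
      TensorProduct.map (LinearMap.mulRight k c) (LinearMap.mulLeft k d) t *
      ((1 : R) ⊗ₜ[k] y) := by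
  induction t using TensorProduct.induction_on with
  | zero => simp
  | tmul u v => simp [mul_assoc]
  | add s t hs ht => simp only [mul_add, add_mul, map_add, hs, ht]

lemma tmul_one_mul_innerDoubleDeriv (b p q x : R) :
    (b ⊗ₜ[k] (1 : R)) * innerDoubleDeriv p q x = (b * x * p) ⊗ₜ[k] q - (b * p) ⊗ₜ[k] (q * x) := by
  simp [mul_sub, mul_assoc]

lemma innerDoubleDeriv_mul_one_tmul (c p q x : R) :
    innerDoubleDeriv p q x * ((1 : R) ⊗ₜ[k] c) = (x * p) ⊗ₜ[k] (q * c) - p ⊗ₜ[k] (q * x * c) := by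
  simp [sub_mul, mul_assoc]

lemma tmul_one_mul_innerDoubleDeriv_mul_one_tmul (b c p q x : R) :
    (b ⊗ₜ[k] (1 : R)) * innerDoubleDeriv p q x * ((1 : R) ⊗ₜ[k] c) =
      (b * x * p) ⊗ₜ[k] (q * c) - (b * p) ⊗ₜ[k] (q * x * c) := by
  simp [mul_sub, sub_mul, mul_assoc]

namespace IsDoubleDeriv

variable {δ δ' : R →ₗ[k] R ⊗[k] R}

lemma map_one (hδ : IsDoubleDeriv δ) : δ 1 = 0 := by
  have h := hδ 1 1
  rw [one_mul, ← Algebra.TensorProduct.one_def, mul_one, one_mul] at h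
  exact left_eq_add.mp h

lemma add (hδ : IsDoubleDeriv δ) (hδ' : IsDoubleDeriv δ') : IsDoubleDeriv (δ + δ') := by
  intro x y
  simp only [LinearMap.add_apply, hδ x y, hδ' x y, add_mul, mul_add]
  abel

lemma map_mulRight_mulLeft_comp (hδ : IsDoubleDeriv δ) (c d : R) :
    IsDoubleDeriv (TensorProduct.map (LinearMap.mulRight k c) (LinearMap.mulLeft k d) ∘ₗ δ) := by
  intro x y
  have hl := map_mulRight_mulLeft_mul (k := k) c d 1 y (δ x)
  have hr := map_mulRight_mulLeft_mul (k := k) c d x 1 (δ y)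
  simp only [Algebra.TensorProduct.one_def.symm, one_mul, mul_one] at hl hr
  rw [LinearMap.comp_apply, hδ x y, map_add, hl, hr]
  rfl

lemma map_mul_of_map_left_eq_zero (hδ : IsDoubleDeriv δ) {b : R} (hb : δ b = 0) (x : R) :
    δ (b * x) = (b ⊗ₜ[k] (1 : R)) * δ x := by
  rw [hδ, hb, zero_mul, zero_add]

lemma map_mul_of_map_right_eq_zero (hδ : IsDoubleDeriv δ) {b : R} (hb : δ b = 0) (x : R) :
    δ (x * b) = δ x * ((1 : R) ⊗ₜ[k] b) := by
  rw [hδ, hb, mul_zero, add_zero]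

lemma eq_of_eqOn_adjoin (hδ : IsDoubleDeriv δ) (hδ' : IsDoubleDeriv δ') {s : Set R}
    (hs : Algebra.adjoin k s = ⊤) (h : Set.EqOn δ δ' s) : δ = δ' := by
  ext x
  have hx : x ∈ Algebra.adjoin k s := hs ▸ Algebra.mem_top
  induction hx using Algebra.adjoin_induction with
  | mem x hx => exact h hx
  | algebraMap r => simp [Algebra.algebraMap_eq_smul_one, hδ.map_one, hδ'.map_one]
  | add x y _ _ hx hy => simp only [map_add, hx, hy]
  | mul x y _ _ hx hy => rw [hδ, hδ', hx, hy]

end IsDoubleDeriv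

end DoubleDeriv

namespace IsIdempotentElem

variable {R : Type*} [Ring R] {p x y : R}

lemma mul_eq_zero_of_mul_one_sub_eq (hp : IsIdempotentElem p) (h : y * (1 - p) = x) :
    x * p = 0 := by
  rw [← h, mul_assoc, hp.one_sub_mul_self, mul_zero]

lemma mul_eq_zero_of_one_sub_mul_eq (hp : IsIdempotentElem p) (h : (1 - p) * y = x) :
    p * x = 0 := by
  rw [← h, ← mul_assoc, hp.mul_one_sub_self, zero_mul]

end IsIdempotentElem

section Fusion

variable {k : Type*} [Field k] {A : Type*} [Ring A] [Algebra k A] {e1 e2 : A}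

local notation "ι" => extι k A e1 e2
local notation "ε" => extEps k A e1 e2
local notation "E₁₂" => ext12 k A e1 e2
local notation "E₂₁" => ext21 k A e1 e2

lemma adjoin_range_mkAlgHom_ι :
    Algebra.adjoin k (Set.range fun x : A ⊕ Fin 2 =>
      RingQuot.mkAlgHom k (FusionRel k A e1 e2) (FreeAlgebra.ι k x)) = ⊤ := by
  rw [Set.range_comp' (RingQuot.mkAlgHom k _) (FreeAlgebra.ι k), ← AlgHom.map_adjoin,
    FreeAlgebra.adjoin_range_ι, Algebra.map_top, AlgHom.range_eq_top]
  exact RingQuot.mkAlgHom_surjective k _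

lemma ext12_mul_ext21 : E₁₂ * E₂₁ = ι e1 :=
  (map_mul _ _ _).symm.trans (RingQuot.mkAlgHom_rel k FusionRel.mul1221)

lemma extι_mul_ext12 : ι e1 * E₁₂ = E₁₂ :=
  (map_mul _ _ _).symm.trans (RingQuot.mkAlgHom_rel k FusionRel.e1mul12)

lemma ext12_mul_extι : E₁₂ * ι e2 = E₁₂ :=
  (map_mul _ _ _).symm.trans (RingQuot.mkAlgHom_rel k FusionRel.mul12e2)

lemma extι_mul_ext21 : ι e2 * E₂₁ = E₂₁ :=
  (map_mul _ _ _).symm.trans (RingQuot.mkAlgHom_rel k FusionRel.e2mul21)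

lemma ext21_mul_extι : E₂₁ * ι e1 = E₂₁ :=
  (map_mul _ _ _).symm.trans (RingQuot.mkAlgHom_rel k FusionRel.mul21e1)

lemma ext12_mul_extι_eq_zero {a : A} (ha : e2 * a = 0) : E₁₂ * ι a = 0 := by
  rw [← ext12_mul_extι, mul_assoc, ← map_mul, ha, map_zero, mul_zero]

lemma extι_mul_ext21_eq_zero {a : A} (ha : a * e2 = 0) : ι a * E₂₁ = 0 := by
  rw [← extι_mul_ext21, ← mul_assoc, ← map_mul, ha, map_zero, zero_mul]

lemma extι_mul_ext12_eq_zero {a : A} (ha : a * e1 = 0) : ι a * E₁₂ = 0 := by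
  rw [← extι_mul_ext12, ← mul_assoc, ← map_mul, ha, map_zero, zero_mul]

lemma ext21_mul_extι_eq_zero {a : A} (ha : e1 * a = 0) : E₂₁ * ι a = 0 := by
  rw [← ext21_mul_extι, mul_assoc, ← map_mul, ha, map_zero, mul_zero]

lemma ext12_mul_ext12 (h21 : e2 * e1 = 0) : E₁₂ * E₁₂ = 0 := by
  nth_rw 2 [← extι_mul_ext12]
  rw [← mul_assoc, ext12_mul_extι_eq_zero h21, zero_mul]

lemma ext21_mul_ext21 (h12 : e1 * e2 = 0) : E₂₁ * E₂₁ = 0 := by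
  nth_rw 2 [← extι_mul_ext21]
  rw [← mul_assoc, ext21_mul_extι_eq_zero h12, zero_mul]

lemma ext12_mul_extEps : E₁₂ * ε = 0 := by
  rw [extEps, mul_sub, mul_one, ext12_mul_extι, sub_self]

lemma extEps_mul_ext21 : ε * E₂₁ = 0 := by
  rw [extEps, sub_mul, one_mul, extι_mul_ext21, sub_self]

lemma extEps_mul_ext12 (h21 : e2 * e1 = 0) : ε * E₁₂ = E₁₂ := by
  rw [extEps, sub_mul, one_mul, extι_mul_ext12_eq_zero h21, sub_zero]

lemma ext21_mul_extEps (h12 : e1 * e2 = 0) : E₂₁ * ε = E₂₁ := by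
  rw [extEps, mul_sub, mul_one, ext21_mul_extι_eq_zero h12, sub_zero]

lemma extι_mul_extEps {a : A} (ha : a * e2 = 0) : ι a * ε = ι a := by
  rw [extEps, mul_sub, mul_one, ← map_mul, ha, map_zero, sub_zero]

lemma extEps_mul_extι {a : A} (ha : e2 * a = 0) : ε * ι a = ι a := by
  rw [extEps, sub_mul, one_mul, ← map_mul, ha, map_zero, sub_zero]

lemma extι_mul_extEps_self (he2 : IsIdempotentElem e2) : ι e2 * ε = 0 := by
  rw [extEps, mul_sub, mul_one, ← map_mul, he2.eq, sub_self]

lemma extEps_mul_extι_self (he2 : IsIdempotentElem e2) : ε * ι e2 = 0 := by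
  rw [extEps, sub_mul, one_mul, ← map_mul, he2.eq, sub_self]

lemma IsDoubleDeriv.trOf {δ : ExtAlg k A e1 e2 →ₗ[k] ExtAlg k A e1 e2 ⊗[k] ExtAlg k A e1 e2}
    (hδ : IsDoubleDeriv δ) : IsDoubleDeriv (TrOf δ) :=
  (hδ.map_mulRight_mulLeft_comp _ _).add (hδ.map_mulRight_mulLeft_comp _ _)

lemma trOf_apply_eq_zero {δ : ExtAlg k A e1 e2 →ₗ[k] ExtAlg k A e1 e2 ⊗[k] ExtAlg k A e1 e2}
    {x : ExtAlg k A e1 e2} (h : δ x = 0) : TrOf δ x = 0 := by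
  simp [TrOf, h]

namespace IsGaugeExt

variable {es : A} {δ : ExtAlg k A e1 e2 →ₗ[k] ExtAlg k A e1 e2 ⊗[k] ExtAlg k A e1 e2}

lemma isDoubleDeriv (h : IsGaugeExt es δ) : IsDoubleDeriv δ := h.leib

lemma map_extι (h : IsGaugeExt es δ) (a : A) :
    δ (ι a) = innerDoubleDeriv (ι es) (ι es) (ι a) := by
  rw [h.on_A, innerDoubleDeriv_apply, map_mul, map_mul]

lemma trOf_extι (h : IsGaugeExt es δ) (a : A) :
    TrOf δ (ι a) = innerDoubleDeriv (ι es * ε) (ε * ι es) (ι a)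
      + innerDoubleDeriv (ι es * (E₂₁ * ε)) ((ε * E₁₂) * ι es) (ι a) := by
  simp only [TrOf, LinearMap.add_apply, LinearMap.comp_apply, h.map_extι,
    ← map_mulRight_mulLeft_comp_innerDoubleDeriv]

lemma trOf_ext12_mul (h : IsGaugeExt es δ) (x : ExtAlg k A e1 e2) :
    TrOf δ (E₁₂ * x) = (E₁₂ ⊗ₜ[k] (1 : ExtAlg k A e1 e2)) * TrOf δ x :=
  h.isDoubleDeriv.trOf.map_mul_of_map_left_eq_zero (trOf_apply_eq_zero h.on_e12) x

lemma trOf_mul_ext21 (h : IsGaugeExt es δ) (x : ExtAlg k A e1 e2) :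
    TrOf δ (x * E₂₁) = TrOf δ x * ((1 : ExtAlg k A e1 e2) ⊗ₜ[k] E₂₁) :=
  h.isDoubleDeriv.trOf.map_mul_of_map_right_eq_zero (trOf_apply_eq_zero h.on_e21) x

end IsGaugeExt

variable (h12 : e1 * e2 = 0) (h21 : e2 * e1 = 0)
variable {E1 E2 : ExtAlg k A e1 e2 →ₗ[k] ExtAlg k A e1 e2 ⊗[k] ExtAlg k A e1 e2}
include h12 h21

lemma IsGaugeExt.trOf_extι_e1 (hE1 : IsGaugeExt e1 E1) (a : A) :
    TrOf E1 (ι a) = innerDoubleDeriv (ι e1) (ι e1) (ι a) := by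
  rw [hE1.trOf_extι, extι_mul_extEps h12, extEps_mul_extι h21, ext21_mul_extEps h12,
    extEps_mul_ext12 h21, extι_mul_ext21_eq_zero h12, ext12_mul_extι_eq_zero h21]
  simp

lemma IsGaugeExt.trOf_extι_e2 (he2 : IsIdempotentElem e2) (hE2 : IsGaugeExt e2 E2) (a : A) :
    TrOf E2 (ι a) = innerDoubleDeriv E₂₁ E₁₂ (ι a) := by
  rw [hE2.trOf_extι, extι_mul_extEps_self he2, extEps_mul_extι_self he2, ext21_mul_extEps h12,
    extEps_mul_ext12 h21, extι_mul_ext21, ext12_mul_extι]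
  simp

lemma trOf_add_trOf (he2 : IsIdempotentElem e2) (hE1 : IsGaugeExt e1 E1)
    (hE2 : IsGaugeExt e2 E2) :
    TrOf E1 + TrOf E2 = innerDoubleDeriv (ι e1) (ι e1) + innerDoubleDeriv E₂₁ E₁₂ := by
  refine (hE1.isDoubleDeriv.trOf.add hE2.isDoubleDeriv.trOf).eq_of_eqOn_adjoin
    ((isDoubleDeriv_innerDoubleDeriv _ _).add (isDoubleDeriv_innerDoubleDeriv _ _))
    adjoin_range_mkAlgHom_ι ?_
  rintro _ ⟨a | j, rfl⟩
  · exact congrArg₂ (· + ·) (hE1.trOf_extι_e1 h12 h21 a) (hE2.trOf_extι_e2 h12 h21 he2 a)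
  · fin_cases j
    · show (TrOf E1 + TrOf E2) E₁₂
        = (innerDoubleDeriv (k := k) (ι e1) (ι e1) + innerDoubleDeriv (k := k) E₂₁ E₁₂) E₁₂
      simp [trOf_apply_eq_zero hE1.on_e12, trOf_apply_eq_zero hE2.on_e12,
        ext12_mul_extι_eq_zero h21, extι_mul_ext12, ext12_mul_ext21, ext12_mul_ext12 h21]
    · show (TrOf E1 + TrOf E2) E₂₁
        = (innerDoubleDeriv (k := k) (ι e1) (ι e1) + innerDoubleDeriv (k := k) E₂₁ E₁₂) E₂₁
      simp [trOf_apply_eq_zero hE1.on_e21, trOf_apply_eq_zero hE2.on_e21,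
        extι_mul_ext21_eq_zero h12, ext21_mul_extι, ext12_mul_ext21, ext21_mul_ext21 h12]

variable (he2 : IsIdempotentElem e2) (hE1 : IsGaugeExt e1 E1) (hE2 : IsGaugeExt e2 E2)
include he2 hE1 hE2

lemma trOf_gauge_extι {t : A} (ht : t * e2 = 0) (ht' : e2 * t = 0) :
    TrOf E1 (ι t) = (ι t * ι e1) ⊗ₜ[k] ι e1 - ι e1 ⊗ₜ[k] (ι e1 * ι t) ∧
      TrOf E2 (ι t) = 0 := by
  refine ⟨hE1.trOf_extι_e1 h12 h21 t, ?_⟩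
  simp [hE2.trOf_extι_e2 h12 h21 he2, extι_mul_ext21_eq_zero ht, ext12_mul_extι_eq_zero ht']

lemma trOf_gauge_ext12_mul {u : A} (hu : u * e2 = 0) :
    TrOf E1 (E₁₂ * ι u) = (E₁₂ * ι u * ι e1) ⊗ₜ[k] ι e1 ∧
      TrOf E2 (E₁₂ * ι u) = -ι e1 ⊗ₜ[k] (E₁₂ * ι u) := by
  rw [hE1.trOf_ext12_mul, hE1.trOf_extι_e1 h12 h21, tmul_one_mul_innerDoubleDeriv,
    hE2.trOf_ext12_mul, hE2.trOf_extι_e2 h12 h21 he2, tmul_one_mul_innerDoubleDeriv,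
    ext12_mul_extι_eq_zero h21, mul_assoc E₁₂ (ι u) E₂₁, extι_mul_ext21_eq_zero hu,
    ext12_mul_ext21]
  simp

lemma trOf_gauge_mul_ext21 {v : A} (hv : e2 * v = 0) :
    TrOf E1 (ι v * E₂₁) = -ι e1 ⊗ₜ[k] (ι e1 * (ι v * E₂₁)) ∧
      TrOf E2 (ι v * E₂₁) = (ι v * E₂₁) ⊗ₜ[k] ι e1 := by
  rw [hE1.trOf_mul_ext21, hE1.trOf_extι_e1 h12 h21, innerDoubleDeriv_mul_one_tmul,
    hE2.trOf_mul_ext21, hE2.trOf_extι_e2 h12 h21 he2, innerDoubleDeriv_mul_one_tmul,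
    extι_mul_ext21_eq_zero h12, ext12_mul_ext21, ext12_mul_extι_eq_zero hv]
  simp [mul_assoc]

lemma trOf_gauge_ext12_mul_mul_ext21 (w : A) :
    TrOf E1 (E₁₂ * ι w * E₂₁) = 0 ∧
      TrOf E2 (E₁₂ * ι w * E₂₁) = (E₁₂ * ι w * E₂₁ * ι e1) ⊗ₜ[k] ι e1
        - ι e1 ⊗ₜ[k] (ι e1 * (E₁₂ * ι w * E₂₁)) := by
  rw [hE1.trOf_mul_ext21, hE1.trOf_ext12_mul, hE1.trOf_extι_e1 h12 h21,
    tmul_one_mul_innerDoubleDeriv_mul_one_tmul, hE2.trOf_mul_ext21, hE2.trOf_ext12_mul,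
    hE2.trOf_extι_e2 h12 h21 he2, tmul_one_mul_innerDoubleDeriv_mul_one_tmul,
    extι_mul_ext21_eq_zero h12, ext12_mul_extι_eq_zero h21, ext12_mul_ext21,
    mul_assoc _ E₂₁, ext21_mul_extι, ← mul_assoc (ι e1), ← mul_assoc (ι e1), extι_mul_ext12]
  simp

lemma trOf_add_trOf_apply_of_inCorner {a : ExtAlg k A e1 e2} (ha : InCorner a) :
    TrOf E1 a + TrOf E2 a = (a * ι e1) ⊗ₜ[k] ι e1 - ι e1 ⊗ₜ[k] (ι e1 * a) := by
  have ha21 : a * E₂₁ = 0 := by rw [← ha, mul_assoc, extEps_mul_ext21, mul_zero]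
  have h12a : E₁₂ * a = 0 := by
    rw [← ha, ← mul_assoc, ← mul_assoc, ext12_mul_extEps, zero_mul, zero_mul]
  rw [← LinearMap.add_apply, trOf_add_trOf h12 h21 he2 hE1 hE2, LinearMap.add_apply,
    innerDoubleDeriv_apply, innerDoubleDeriv_apply, ha21, h12a]
  simp

end Fusion

theorem statement10_general (k : Type*) [Field k]
    (A : Type*) [Ring A] [Algebra k A]
    (I : Type*) [DecidableEq I] (e : I → A)
    (horth : ∀ s t : I, e s * e t = if s = t then e s else 0)
    (i1 i2 : I) (h12 : i1 ≠ i2)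
    (E1 E2 : ExtAlg k A (e i1) (e i2) →ₗ[k]
      ExtAlg k A (e i1) (e i2) ⊗[k] ExtAlg k A (e i1) (e i2))
    (hE1 : IsGaugeExt (e i1) E1) (hE2 : IsGaugeExt (e i2) E2) :
    (∀ t : A, (1 - e i2) * t * (1 - e i2) = t →
      TrOf E1 (extι k A (e i1) (e i2) t) =
        (extι k A (e i1) (e i2) t * extι k A (e i1) (e i2) (e i1)) ⊗ₜ[k]
            (extι k A (e i1) (e i2) (e i1))
          - (extι k A (e i1) (e i2) (e i1)) ⊗ₜ[k]
            (extι k A (e i1) (e i2) (e i1) * extι k A (e i1) (e i2) t) ∧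
      TrOf E2 (extι k A (e i1) (e i2) t) = 0) ∧
    (∀ u : A, e i2 * u * (1 - e i2) = u →
      TrOf E1 (ext12 k A (e i1) (e i2) * extι k A (e i1) (e i2) u) =
        ((ext12 k A (e i1) (e i2) * extι k A (e i1) (e i2) u) *
            extι k A (e i1) (e i2) (e i1)) ⊗ₜ[k] (extι k A (e i1) (e i2) (e i1)) ∧
      TrOf E2 (ext12 k A (e i1) (e i2) * extι k A (e i1) (e i2) u) =
        - (extι k A (e i1) (e i2) (e i1)) ⊗ₜ[k]
            (ext12 k A (e i1) (e i2) * extι k A (e i1) (e i2) u)) ∧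
    (∀ v : A, (1 - e i2) * v * e i2 = v →
      TrOf E1 (extι k A (e i1) (e i2) v * ext21 k A (e i1) (e i2)) =
        - (extι k A (e i1) (e i2) (e i1)) ⊗ₜ[k]
            (extι k A (e i1) (e i2) (e i1) *
              (extι k A (e i1) (e i2) v * ext21 k A (e i1) (e i2))) ∧
      TrOf E2 (extι k A (e i1) (e i2) v * ext21 k A (e i1) (e i2)) =
        (extι k A (e i1) (e i2) v * ext21 k A (e i1) (e i2)) ⊗ₜ[k]
          (extι k A (e i1) (e i2) (e i1))) ∧
    (∀ w : A, e i2 * w * e i2 = w →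
      TrOf E1 (ext12 k A (e i1) (e i2) * extι k A (e i1) (e i2) w *
          ext21 k A (e i1) (e i2)) = 0 ∧
      TrOf E2 (ext12 k A (e i1) (e i2) * extι k A (e i1) (e i2) w *
          ext21 k A (e i1) (e i2)) =
        ((ext12 k A (e i1) (e i2) * extι k A (e i1) (e i2) w *
            ext21 k A (e i1) (e i2)) * extι k A (e i1) (e i2) (e i1)) ⊗ₜ[k]
          (extι k A (e i1) (e i2) (e i1))
          - (extι k A (e i1) (e i2) (e i1)) ⊗ₜ[k]
            (extι k A (e i1) (e i2) (e i1) *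
              (ext12 k A (e i1) (e i2) * extι k A (e i1) (e i2) w *
                ext21 k A (e i1) (e i2)))) ∧
    (∀ a : ExtAlg k A (e i1) (e i2), InCorner a →
      TrOf E1 a + TrOf E2 a =
        (a * extι k A (e i1) (e i2) (e i1)) ⊗ₜ[k] (extι k A (e i1) (e i2) (e i1))
          - (extι k A (e i1) (e i2) (e i1)) ⊗ₜ[k]
            (extι k A (e i1) (e i2) (e i1) * a)) := by
  have he2 : IsIdempotentElem (e i2) := (horth i2 i2).trans (if_pos rfl)
  have he12 : e i1 * e i2 = 0 := by simpa [h12] using horth i1 i2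
  have he21 : e i2 * e i1 = 0 := by simpa [h12.symm] using horth i2 i1
  refine ⟨fun t ht => ?_, fun u hu => ?_, fun v hv => ?_,
    fun w _ => trOf_gauge_ext12_mul_mul_ext21 he12 he21 he2 hE1 hE2 w,
    fun a ha => trOf_add_trOf_apply_of_inCorner he12 he21 he2 hE1 hE2 ha⟩
  · exact trOf_gauge_extι he12 he21 he2 hE1 hE2 (he2.mul_eq_zero_of_mul_one_sub_eq ht)
      (he2.mul_eq_zero_of_one_sub_mul_eq ((mul_assoc _ _ _).symm.trans ht))
  · exact trOf_gauge_ext12_mul he12 he21 he2 hE1 hE2 (he2.mul_eq_zero_of_mul_one_sub_eq hu)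
  · exact trOf_gauge_mul_ext21 he12 he21 he2 hE1 hE2
      (he2.mul_eq_zero_of_one_sub_mul_eq ((mul_assoc _ _ _).symm.trans hv))

/-- Values of `Tr(E₁)` and `Tr(E₂)` on the four types of generators of
the fusion algebra `A^f`, and the identity `Tr(E₁) + Tr(E₂) = F₁` on `A^f`. -/
theorem statement10 (k : Type*) [Field k] [CharZero k]
    (A : Type*) [Ring A] [Algebra k A]
    (I : Type*) [Fintype I] [DecidableEq I] (e : I → A)
    (horth : ∀ s t : I, e s * e t = if s = t then e s else 0)
    (hsum : ∑ s : I, e s = 1)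
    (i1 i2 : I) (h12 : i1 ≠ i2)
    (E1 E2 : ExtAlg k A (e i1) (e i2) →ₗ[k]
      ExtAlg k A (e i1) (e i2) ⊗[k] ExtAlg k A (e i1) (e i2))
    (hE1 : IsGaugeExt (e i1) E1) (hE2 : IsGaugeExt (e i2) E2) :
    (∀ t : A, (1 - e i2) * t * (1 - e i2) = t →
      TrOf E1 (extι k A (e i1) (e i2) t) =
        (extι k A (e i1) (e i2) t * extι k A (e i1) (e i2) (e i1)) ⊗ₜ[k]
            (extι k A (e i1) (e i2) (e i1))
          - (extι k A (e i1) (e i2) (e i1)) ⊗ₜ[k]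
            (extι k A (e i1) (e i2) (e i1) * extι k A (e i1) (e i2) t) ∧
      TrOf E2 (extι k A (e i1) (e i2) t) = 0) ∧
    (∀ u : A, e i2 * u * (1 - e i2) = u →
      TrOf E1 (ext12 k A (e i1) (e i2) * extι k A (e i1) (e i2) u) =
        ((ext12 k A (e i1) (e i2) * extι k A (e i1) (e i2) u) *
            extι k A (e i1) (e i2) (e i1)) ⊗ₜ[k] (extι k A (e i1) (e i2) (e i1)) ∧
      TrOf E2 (ext12 k A (e i1) (e i2) * extι k A (e i1) (e i2) u) =
        - (extι k A (e i1) (e i2) (e i1)) ⊗ₜ[k]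
            (ext12 k A (e i1) (e i2) * extι k A (e i1) (e i2) u)) ∧
    (∀ v : A, (1 - e i2) * v * e i2 = v →
      TrOf E1 (extι k A (e i1) (e i2) v * ext21 k A (e i1) (e i2)) =
        - (extι k A (e i1) (e i2) (e i1)) ⊗ₜ[k]
            (extι k A (e i1) (e i2) (e i1) *
              (extι k A (e i1) (e i2) v * ext21 k A (e i1) (e i2))) ∧
      TrOf E2 (extι k A (e i1) (e i2) v * ext21 k A (e i1) (e i2)) =
        (extι k A (e i1) (e i2) v * ext21 k A (e i1) (e i2)) ⊗ₜ[k]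
          (extι k A (e i1) (e i2) (e i1))) ∧
    (∀ w : A, e i2 * w * e i2 = w →
      TrOf E1 (ext12 k A (e i1) (e i2) * extι k A (e i1) (e i2) w *
          ext21 k A (e i1) (e i2)) = 0 ∧
      TrOf E2 (ext12 k A (e i1) (e i2) * extι k A (e i1) (e i2) w *
          ext21 k A (e i1) (e i2)) =
        ((ext12 k A (e i1) (e i2) * extι k A (e i1) (e i2) w *
            ext21 k A (e i1) (e i2)) * extι k A (e i1) (e i2) (e i1)) ⊗ₜ[k]
          (extι k A (e i1) (e i2) (e i1))
          - (extι k A (e i1) (e i2) (e i1)) ⊗ₜ[k]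
            (extι k A (e i1) (e i2) (e i1) *
              (ext12 k A (e i1) (e i2) * extι k A (e i1) (e i2) w *
                ext21 k A (e i1) (e i2)))) ∧
    (∀ a : ExtAlg k A (e i1) (e i2), InCorner a →
      TrOf E1 a + TrOf E2 a =
        (a * extι k A (e i1) (e i2) (e i1)) ⊗ₜ[k] (extι k A (e i1) (e i2) (e i1))
          - (extι k A (e i1) (e i2) (e i1)) ⊗ₜ[k]
            (extι k A (e i1) (e i2) (e i1) * a)) :=
  statement10_general k A I e horth i1 i2 h12 E1 E2 hE1 hE2
end

section
/- Let (A, ⟪-,-⟫) be a double quasi-Poisson algebra over B = ⊕_{s∈I} k e_s and (A', ⟪-,-⟫') a double quasi-Poisson algebra over B' = ⊕_{t∈I'} k e'_t. Then the direct sum algebra A ⊕ A' (componentwise operations, unit (1,1)), viewed over B ⊕ B' with the orthogonal idempotents (e_s,0) and (0,e'_t), carries the (B⊕B')-linear double bracket ⟪(a₁,b₁),(a₂,b₂)⟫^⊕ = ι(⟪a₁,a₂⟫) + ι'(⟪b₁,b₂⟫') (where ι, ι' are induced by the inclusions of A and A' into A⊕A'), and this double bracket is quasi-Poisson over B⊕B'.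 Moreover, if Φ and Φ' are multiplicative moment maps for (A,⟪-,-⟫) and (A',⟪-,-⟫') respectively, then (Φ,Φ') is a multiplicative moment map making A⊕A' a quasi-Hamiltonian algebra. -/
open TensorProduct

/-- A multiplicative moment map for a double bracket with respect to the idempotent
family `e : I → A`: an invertible `Φ = Σₛ Φₛ` with `Φₛ = eₛΦeₛ` and
`⟪Φₛ,a⟫ = ½(a eₛ⊗Φₛ − eₛ⊗Φₛa + aΦₛ⊗eₛ − Φₛ⊗eₛa)`. -/
def IsMomentMapOver {k A : Type*} [Field k] [Ring A] [Algebra k A]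
    {I : Type*} [Fintype I] (e : I → A) (D : DoubleBracket k A) (Φ : A) : Prop :=
  IsUnit Φ ∧ Φ = ∑ s : I, e s * Φ * e s ∧ ∀ (s : I) (a : A),
    D.br (e s * Φ * e s) a = (2⁻¹ : k) •
      ((a * e s) ⊗ₜ[k] (e s * Φ * e s) - (e s) ⊗ₜ[k] ((e s * Φ * e s) * a)
        + (a * (e s * Φ * e s)) ⊗ₜ[k] (e s) - (e s * Φ * e s) ⊗ₜ[k] ((e s) * a))


open TensorProduct

section Aux
variable (k : Type*) [CommRing k] (A : Type*) [Ring A] [Algebra k A]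
  (A' : Type*) [Ring A'] [Algebra k A']

noncomputable def FL : A ⊗[k] A →ₗ[k] (A × A') ⊗[k] (A × A') :=
  TensorProduct.map (LinearMap.inl k A A') (LinearMap.inl k A A')

noncomputable def FR : A' ⊗[k] A' →ₗ[k] (A × A') ⊗[k] (A × A') :=
  TensorProduct.map (LinearMap.inr k A A') (LinearMap.inr k A A')

noncomputable def FL3 : A ⊗[k] (A ⊗[k] A) →ₗ[k] (A × A') ⊗[k] ((A × A') ⊗[k] (A × A')) :=
  TensorProduct.map (LinearMap.inl k A A') (FL k A A')

noncomputable def FR3 : A' ⊗[k] (A' ⊗[k] A') →ₗ[k] (A × A') ⊗[k] ((A × A') ⊗[k] (A × A')) :=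
  TensorProduct.map (LinearMap.inr k A A') (FR k A A')

variable {k A A'}

@[simp] lemma FL_tmul (x y : A) : FL k A A' (x ⊗ₜ[k] y) = ((x,(0:A')) ⊗ₜ[k] (y,(0:A'))) := rfl
@[simp] lemma FR_tmul (x y : A') : FR k A A' (x ⊗ₜ[k] y) = (((0:A),x) ⊗ₜ[k] ((0:A),y)) := rfl
@[simp] lemma FL3_tmul (x : A) (u : A ⊗[k] A) :
    FL3 k A A' (x ⊗ₜ[k] u) = ((x,(0:A')) ⊗ₜ[k] FL k A A' u) := rfl
@[simp] lemma FR3_tmul (x : A') (u : A' ⊗[k] A') :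
    FR3 k A A' (x ⊗ₜ[k] u) = (((0:A),x) ⊗ₜ[k] FR k A A' u) := rfl

lemma comm_FL (u : A ⊗[k] A) :
    (TensorProduct.comm k (A × A') (A × A')) (FL k A A' u)
      = FL k A A' ((TensorProduct.comm k A A) u) := by
  induction u using TensorProduct.induction_on with
  | zero => simp
  | tmul x y => simp
  | add u v hu hv => simp [hu, hv]

lemma comm_FR (u : A' ⊗[k] A') :
    (TensorProduct.comm k (A × A') (A × A')) (FR k A A' u)
      = FR k A A' ((TensorProduct.comm k A' A') u) := by
  induction u using TensorProduct.induction_on with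
  | zero => simp
  | tmul x y => simp
  | add u v hu hv => simp [hu, hv]

lemma FL_mul_one_tmul (u : A ⊗[k] A) (c : A) (d : A') :
    FL k A A' u * ((1 : A × A') ⊗ₜ[k] ((c,d) : A × A'))
      = FL k A A' (u * ((1:A) ⊗ₜ[k] c)) := by
  induction u using TensorProduct.induction_on with
  | zero => simp
  | tmul x y => simp [Algebra.TensorProduct.tmul_mul_tmul, Prod.mk_mul_mk]
  | add u v hu hv => simp [add_mul, hu, hv]

lemma FL_tmul_one_mul (u : A ⊗[k] A) (c : A) (d : A') :
    (((c,d) : A × A') ⊗ₜ[k] (1 : A × A')) * FL k A A' u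
      = FL k A A' ((c ⊗ₜ[k] (1:A)) * u) := by
  induction u using TensorProduct.induction_on with
  | zero => simp
  | tmul x y => simp [Algebra.TensorProduct.tmul_mul_tmul, Prod.mk_mul_mk]
  | add u v hu hv => simp [mul_add, hu, hv]

lemma FR_mul_one_tmul (u : A' ⊗[k] A') (c : A) (d : A') :
    FR k A A' u * ((1 : A × A') ⊗ₜ[k] ((c,d) : A × A'))
      = FR k A A' (u * ((1:A') ⊗ₜ[k] d)) := by
  induction u using TensorProduct.induction_on with
  | zero => simp
  | tmul x y => simp [Algebra.TensorProduct.tmul_mul_tmul, Prod.mk_mul_mk]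
  | add u v hu hv => simp [add_mul, hu, hv]

lemma FR_tmul_one_mul (u : A' ⊗[k] A') (c : A) (d : A') :
    (((c,d) : A × A') ⊗ₜ[k] (1 : A × A')) * FR k A A' u
      = FR k A A' ((d ⊗ₜ[k] (1:A')) * u) := by
  induction u using TensorProduct.induction_on with
  | zero => simp
  | tmul x y => simp [Algebra.TensorProduct.tmul_mul_tmul, Prod.mk_mul_mk]
  | add u v hu hv => simp [mul_add, hu, hv]

end Aux
set_option synthInstance.maxHeartbeats 1000000
set_option maxHeartbeats 1000000

section Aux2
variable {k : Type*} [CommRing k] {A : Type*} [Ring A] [Algebra k A]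
  {A' : Type*} [Ring A'] [Algebra k A']

@[simp] lemma cyc3_tmul (x y z : A) :
    cyc3 k A (x ⊗ₜ[k] (y ⊗ₜ[k] z)) = z ⊗ₜ[k] (x ⊗ₜ[k] y) := by
  simp [cyc3]

lemma cyc3_FL3 (w : A ⊗[k] (A ⊗[k] A)) :
    cyc3 k (A × A') (FL3 k A A' w) = FL3 k A A' (cyc3 k A w) := by
  induction w using TensorProduct.induction_on with
  | zero => simp
  | add u v hu hv => simp [hu, hv]
  | tmul x u =>
    induction u using TensorProduct.induction_on with
    | zero => simp
    | add u v hu hv => simp only [tmul_add, map_add, hu, hv]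
    | tmul y z => simp

lemma cyc3_FR3 (w : A' ⊗[k] (A' ⊗[k] A')) :
    cyc3 k (A × A') (FR3 k A A' w) = FR3 k A A' (cyc3 k A' w) := by
  induction w using TensorProduct.induction_on with
  | zero => simp
  | add u v hu hv => simp [hu, hv]
  | tmul x u =>
    induction u using TensorProduct.induction_on with
    | zero => simp
    | add u v hu hv => simp only [tmul_add, map_add, hu, hv]
    | tmul y z => simp

lemma assoc_FL (v : A ⊗[k] A) (q : A) :
    (TensorProduct.assoc k (A × A') (A × A') (A × A'))
        (FL k A A' v ⊗ₜ[k] ((q, (0:A')) : A × A'))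
      = FL3 k A A' ((TensorProduct.assoc k A A A) (v ⊗ₜ[k] q)) := by
  induction v using TensorProduct.induction_on with
  | zero => simp
  | add u v hu hv => simp only [map_add, add_tmul, hu, hv]
  | tmul x y => simp

lemma assoc_FR (v : A' ⊗[k] A') (q : A') :
    (TensorProduct.assoc k (A × A') (A × A') (A × A'))
        (FR k A A' v ⊗ₜ[k] (((0:A), q) : A × A'))
      = FR3 k A A' ((TensorProduct.assoc k A' A' A') (v ⊗ₜ[k] q)) := by
  induction v using TensorProduct.induction_on with
  | zero => simp
  | add u v hu hv => simp only [map_add, add_tmul, hu, hv]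
  | tmul x y => simp

lemma leftExt_FL (b2 : (A × A') →ₗ[k] (A × A') →ₗ[k] (A × A') ⊗[k] (A × A'))
    (b1 : A →ₗ[k] A →ₗ[k] A ⊗[k] A) (x : A × A')
    (h : ∀ p : A, b2 x ((p, 0) : A × A') = FL k A A' (b1 x.1 p)) (u : A ⊗[k] A) :
    leftExtOf b2 x (FL k A A' u) = FL3 k A A' (leftExtOf b1 x.1 u) := by
  induction u using TensorProduct.induction_on with
  | zero => simp
  | add u v hu hv => simp only [map_add, hu, hv]
  | tmul p q =>
    simp only [leftExtOf, LinearMap.coe_comp, Function.comp_apply, FL_tmul,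
      TensorProduct.map_tmul, LinearMap.id_coe, id_eq, h p, LinearEquiv.coe_coe]
    exact assoc_FL (b1 x.1 p) q

lemma leftExt_FR (b2 : (A × A') →ₗ[k] (A × A') →ₗ[k] (A × A') ⊗[k] (A × A'))
    (b1 : A' →ₗ[k] A' →ₗ[k] A' ⊗[k] A') (x : A × A')
    (h : ∀ p : A', b2 x ((0, p) : A × A') = FR k A A' (b1 x.2 p)) (u : A' ⊗[k] A') :
    leftExtOf b2 x (FR k A A' u) = FR3 k A A' (leftExtOf b1 x.2 u) := by
  induction u using TensorProduct.induction_on with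
  | zero => simp
  | add u v hu hv => simp only [map_add, hu, hv]
  | tmul p q =>
    simp only [leftExtOf, LinearMap.coe_comp, Function.comp_apply, FR_tmul,
      TensorProduct.map_tmul, LinearMap.id_coe, id_eq, h p, LinearEquiv.coe_coe]
    exact assoc_FR (b1 x.2 p) q

/-- The componentwise double bracket on `A × A'`. -/
noncomputable def sumBr (D : DoubleBracket k A) (D' : DoubleBracket k A') :
    (A × A') →ₗ[k] (A × A') →ₗ[k] (A × A') ⊗[k] (A × A') :=
  LinearMap.mk₂ k (fun x y => FL k A A' (D.br x.1 y.1) + FR k A A' (D'.br x.2 y.2))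
    (fun x x' y => by
      simp only [Prod.fst_add, Prod.snd_add, map_add, LinearMap.add_apply]; abel)
    (fun c x y => by
      simp only [Prod.smul_fst, Prod.smul_snd, map_smul, LinearMap.smul_apply, smul_add])
    (fun x y y' => by
      simp only [Prod.fst_add, Prod.snd_add, map_add]; abel)
    (fun c x y => by
      simp only [Prod.smul_fst, Prod.smul_snd, map_smul, smul_add])

@[simp] lemma sumBr_apply (D : DoubleBracket k A) (D' : DoubleBracket k A') (x y : A × A') :
    sumBr D D' x y = FL k A A' (D.br x.1 y.1) + FR k A A' (D'.br x.2 y.2) := rfl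

/-- The componentwise double bracket as a `DoubleBracket`. -/
noncomputable def sumD (D : DoubleBracket k A) (D' : DoubleBracket k A') :
    DoubleBracket k (A × A') where
  br := sumBr D D'
  antisymm := fun a b => by
    simp only [sumBr_apply, D.antisymm a.1 b.1, D'.antisymm a.2 b.2, map_neg, map_add,
      comm_FL, comm_FR, neg_add]
  deriv := fun a b c => by
    obtain ⟨b1, b2⟩ := b
    obtain ⟨c1, c2⟩ := c
    simp only [sumBr_apply, Prod.mk_mul_mk, D.deriv a.1 b1 c1, D'.deriv a.2 b2 c2,
      map_add, add_mul, mul_add]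
    rw [FL_mul_one_tmul, FR_mul_one_tmul, FL_tmul_one_mul, FR_tmul_one_mul]
    abel

lemma sumD_triple (D : DoubleBracket k A) (D' : DoubleBracket k A') (x y z : A × A') :
    (sumD D D').triple x y z
      = FL3 k A A' (D.triple x.1 y.1 z.1) + FR3 k A A' (D'.triple x.2 y.2 z.2) := by
  have hL : ∀ (w : A × A') (p : A), sumBr D D' w ((p, 0) : A × A') = FL k A A' (D.br w.1 p) := by
    intro w p; simp
  have hR : ∀ (w : A × A') (p : A'), sumBr D D' w ((0, p) : A × A') = FR k A A' (D'.br w.2 p) := by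
    intro w p; simp
  have key : ∀ w1 w2 w3 : A × A',
      leftExtOf (sumBr D D') w1 (sumBr D D' w2 w3)
        = FL3 k A A' (leftExtOf D.br w1.1 (D.br w2.1 w3.1))
          + FR3 k A A' (leftExtOf D'.br w1.2 (D'.br w2.2 w3.2)) := by
    intro w1 w2 w3
    rw [sumBr_apply, map_add, leftExt_FL _ _ _ (hL w1), leftExt_FR _ _ _ (hR w1)]
  show tripleOf (sumBr D D') x y z = _
  unfold tripleOf
  rw [key, key, key, map_add, cyc3_FL3, cyc3_FR3, map_add, cyc3_FL3, cyc3_FR3,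
    map_add, cyc3_FL3, cyc3_FR3]
  show _ = FL3 k A A' (tripleOf D.br x.1 y.1 z.1) + FR3 k A A' (tripleOf D'.br x.2 y.2 z.2)
  unfold tripleOf
  simp only [map_add]
  abel

end Aux2

set_option maxHeartbeats 2000000 in
/-- The direct sum of two double quasi-Poisson algebras is a double
quasi-Poisson algebra over `B ⊕ B'` for the componentwise double bracket, and the pair
of moment maps is a moment map for the sum. -/
theorem statement17 (k : Type*) [Field k] [CharZero k]
    (A : Type*) [Ring A] [Algebra k A] (A' : Type*) [Ring A'] [Algebra k A']
    (I : Type*) [Fintype I] [DecidableEq I] (e : I → A)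
    (I' : Type*) [Fintype I'] [DecidableEq I'] (e' : I' → A')
    (horth : ∀ s t : I, e s * e t = if s = t then e s else 0)
    (hsum : ∑ s : I, e s = 1)
    (horth' : ∀ s t : I', e' s * e' t = if s = t then e' s else 0)
    (hsum' : ∑ s : I', e' s = 1)
    (D : DoubleBracket k A) (D' : DoubleBracket k A')
    (hBlin : ∀ (s : I) (a : A), D.br (e s) a = 0 ∧ D.br a (e s) = 0)
    (hBlin' : ∀ (s : I') (a : A'), D'.br (e' s) a = 0 ∧ D'.br a (e' s) = 0)
    (hqp : D.IsQuasiPoissonOver e) (hqp' : D'.IsQuasiPoissonOver e') :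
    ∃ Dsum : DoubleBracket k (A × A'),
      (∀ (a₁ a₂ : A) (b₁ b₂ : A'),
        Dsum.br (a₁, b₁) (a₂, b₂) =
          TensorProduct.map (LinearMap.inl k A A') (LinearMap.inl k A A') (D.br a₁ a₂)
          + TensorProduct.map (LinearMap.inr k A A') (LinearMap.inr k A A')
              (D'.br b₁ b₂)) ∧
      (∀ (s : I ⊕ I') (x : A × A'),
        Dsum.br (Sum.elim (fun u => ((e u, 0) : A × A'))
          (fun v => ((0, e' v) : A × A')) s) x = 0 ∧
        Dsum.br x (Sum.elim (fun u => ((e u, 0) : A × A'))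
          (fun v => ((0, e' v) : A × A')) s) = 0) ∧
      Dsum.IsQuasiPoissonOver
        (Sum.elim (fun u => ((e u, 0) : A × A')) (fun v => ((0, e' v) : A × A'))) ∧
      (∀ (Φ : A) (Φ' : A'), IsMomentMapOver e D Φ → IsMomentMapOver e' D' Φ' →
        IsMomentMapOver
          (Sum.elim (fun u => ((e u, 0) : A × A')) (fun v => ((0, e' v) : A × A')))
          Dsum ((Φ, Φ') : A × A')) := by
  
  classical
  refine ⟨sumD D D', fun a₁ a₂ b₁ b₂ => rfl, ?_, ?_, ?_⟩
  · -- B-linearity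
    intro s x
    cases s with
    | inl u =>
      constructor
      · show sumBr D D' ((e u, 0) : A × A') x = 0
        simp [(hBlin u x.1).1]
      · show sumBr D D' x ((e u, 0) : A × A') = 0
        simp [(hBlin u x.1).2]
    | inr v =>
      constructor
      · show sumBr D D' (((0 : A), e' v) : A × A') x = 0
        simp [(hBlin' v x.2).1]
      · show sumBr D D' x (((0 : A), e' v) : A × A') = 0
        simp [(hBlin' v x.2).2]
  · -- quasi-Poisson
    intro a b c
    obtain ⟨a1, a2⟩ := a
    obtain ⟨b1, b2⟩ := b
    obtain ⟨c1, c2⟩ := c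
    rw [sumD_triple, hqp a1 b1 c1, hqp' a2 b2 c2, map_smul, map_smul, ← smul_add]
    congr 1
    rw [Fintype.sum_sum_type, map_sum, map_sum]
    congr 1
    · refine Finset.sum_congr rfl fun u _ => ?_
      simp [Prod.mk_mul_mk, mul_zero, zero_mul]
    · refine Finset.sum_congr rfl fun v _ => ?_
      simp [Prod.mk_mul_mk, mul_zero, zero_mul]
  · -- moment maps
    rintro Φ Φ' ⟨hu, hdec, hbr⟩ ⟨hu', hdec', hbr'⟩
    refine ⟨?_, ?_, ?_⟩
    · obtain ⟨U, hU⟩ := hu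
      obtain ⟨U', hU'⟩ := hu'
      refine isUnit_iff_exists.mpr ⟨(((U⁻¹ : Units A) : A), ((U'⁻¹ : Units A') : A')), ?_, ?_⟩ <;>
        simp [Prod.mk_mul_mk, ← hU, ← hU', Prod.ext_iff]
    · rw [Fintype.sum_sum_type]
      simp only [Sum.elim_inl, Sum.elim_inr, Prod.mk_mul_mk, mul_zero, zero_mul]
      ext
      · simp [Prod.fst_sum, ← hdec]
      · simp [Prod.snd_sum, ← hdec']
    · intro s x
      obtain ⟨x1, x2⟩ := x
      cases s with
      | inl u =>
        show sumBr D D' (((e u, 0) : A × A') * (Φ, Φ') * ((e u, 0) : A × A')) (x1, x2) = _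
        simp only [Sum.elim_inl, Prod.mk_mul_mk, mul_zero, zero_mul, sumBr_apply,
          map_zero, LinearMap.zero_apply, add_zero]
        rw [hbr u x1]
        simp [Prod.mk_mul_mk, mul_zero, zero_mul, map_sub, map_add, map_smul]
      | inr v =>
        show sumBr D D' ((((0 : A), e' v) : A × A') * (Φ, Φ') * (((0 : A), e' v) : A × A')) (x1, x2) = _
        simp only [Sum.elim_inr, Prod.mk_mul_mk, mul_zero, zero_mul, sumBr_apply,
          map_zero, LinearMap.zero_apply, zero_add]
        rw [hbr' v x2]
        simp [Prod.mk_mul_mk, mul_zero, zero_mul, map_sub, map_add, map_smul]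
end

section
/- Let n ≥ 2, let A be a B-algebra with a B-linear n-bracket ⟪-,…,-⟫ and A' a B'-algebra with a B'-linear n-bracket ⟪-,…,-⟫'. Then there exists a unique (B⊕B')-linear n-bracket ⟪-,…,-⟫^⊕ on the direct sum algebra A ⊕ A' extending the n-brackets of A and A' (via the inclusions of A and A' into A⊕A') and satisfying ⟪c₁,…,cₙ⟫^⊕ = 0 whenever there exist i ≠ j with c_i = (a,0) and c_j = (0,b); explicitly, ⟪(a₁,b₁),…,(aₙ,bₙ)⟫^⊕ = ι^{⊗n}(⟪a₁,…,aₙ⟫) + (ι')^{⊗n}(⟪b₁,…,bₙ⟫'), where ι, ι' are the inclusions of A and A' into A⊕A'. -/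
/-!
Splitting every argument as `(a, 0) + (0, b)` and expanding multilinearly writes a bracket on
`A × A'` as a sum over subsets of positions; vanishing on mixed arguments kills all terms but the
two pure ones, which the extension conditions determine. This gives uniqueness. The componentwise
bracket exists because `ι^{⊗n}` commutes with the cyclic reindexing and intertwines left and right
multiplication by `(b, b')` with multiplication by `b` (and likewise for `ι'`), so it inherits
cyclic antisymmetry and the derivation rule from the two factors.
-/

open TensorProduct

/-- A `B`-linear `n`-bracket on a `k`-algebra `A` (Van den Bergh): a `k`-multilinear map
`A^×n → A^⊗n` vanishing when an argument lies in `B`, cyclically antisymmetric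
(with sign `(−1)^{n+1}`), and a derivation in its last argument for the outer
`A`-bimodule structure on `A^⊗n`. -/
structure NBracket (k : Type*) [Field k] (A : Type*) [Ring A] [Algebra k A]
    (n : ℕ) (hn : 0 < n) (B : Subalgebra k A) where
  br : MultilinearMap k (fun _ : Fin n => A) (PiTensorProduct k (fun _ : Fin n => A))
  blin : ∀ (v : Fin n → A) (i : Fin n), v i ∈ B → br v = 0
  cyclic : ∀ v : Fin n → A,
    br (fun i => v ((finRotate n).symm i)) =
      ((-1 : ℤ) ^ (n + 1)) •
        (PiTensorProduct.reindex k (fun _ : Fin n => A) (finRotate n)) (br v)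
  deriv : ∀ (v : Fin n → A) (b c : A),
    br (Function.update v ⟨n - 1, Nat.sub_lt hn Nat.one_pos⟩ (b * c)) =
      PiTensorProduct.map (Function.update
          (fun _ : Fin n => (LinearMap.id : A →ₗ[k] A))
          ⟨n - 1, Nat.sub_lt hn Nat.one_pos⟩ (LinearMap.mulRight k c))
        (br (Function.update v ⟨n - 1, Nat.sub_lt hn Nat.one_pos⟩ b))
      + PiTensorProduct.map (Function.update
          (fun _ : Fin n => (LinearMap.id : A →ₗ[k] A))
          ⟨0, hn⟩ (LinearMap.mulLeft k b))
        (br (Function.update v ⟨n - 1, Nat.sub_lt hn Nat.one_pos⟩ c))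

theorem PiTensorProduct.map_update_id_map {R ι M N : Type*} [CommSemiring R] [DecidableEq ι]
    [AddCommMonoid M] [Module R M] [AddCommMonoid N] [Module R N]
    (φ : M →ₗ[R] N) {L : N →ₗ[R] N} {L' : M →ₗ[R] M} (h : L ∘ₗ φ = φ ∘ₗ L') (i : ι)
    (x : PiTensorProduct R fun _ : ι => M) :
    map (Function.update (fun _ => LinearMap.id) i L) (map (fun _ => φ) x) =
      map (fun _ => φ) (map (Function.update (fun _ => LinearMap.id) i L') x) := by
  rw [← LinearMap.comp_apply, ← LinearMap.comp_apply, ← map_comp, ← map_comp]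
  congr 2
  funext j
  rcases eq_or_ne j i with rfl | hj
  · simpa using h
  · simp [Function.update_of_ne hj]

theorem MultilinearMap.map_prod_eq_of_map_mixed {R ι M M' N : Type*} [CommSemiring R]
    [Fintype ι] [DecidableEq ι] [Nonempty ι] [AddCommMonoid M] [Module R M]
    [AddCommMonoid M'] [Module R M'] [AddCommMonoid N] [Module R N]
    (f : MultilinearMap R (fun _ : ι => M × M') N)
    (hmixed : ∀ v : ι → M × M', (∃ i j, i ≠ j ∧ (v i).2 = 0 ∧ (v j).1 = 0) → f v = 0)
    (v : ι → M × M') :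
    f v = f (fun i => ((v i).1, 0)) + f (fun i => (0, (v i).2)) := by
  have hv : v = (fun i => ((v i).1, 0)) + fun i => (0, (v i).2) := by
    funext i; simp
  have hpure : ∀ s ∉ ({Finset.univ, ∅} : Finset (Finset ι)),
      f (s.piecewise (fun i => ((v i).1, 0)) fun i => (0, (v i).2)) = 0 := by
    intro s hs
    simp only [Finset.mem_insert, Finset.mem_singleton, not_or] at hs
    obtain ⟨i, hi⟩ := Finset.nonempty_iff_ne_empty.2 hs.2
    obtain ⟨j, hj⟩ : ∃ j, j ∉ s := by simpa [Finset.eq_univ_iff_forall] using hs.1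
    refine hmixed _ ⟨i, j, ne_of_mem_of_not_mem hi hj, ?_, ?_⟩
    · simp [Finset.piecewise_eq_of_mem _ _ _ hi]
    · simp [Finset.piecewise_eq_of_notMem _ _ _ hj]
  rw [hv, f.map_add_univ, ← Finset.sum_subset (Finset.subset_univ _) fun s _ => hpure s,
    Finset.sum_pair Finset.univ_nonempty.ne_empty, Finset.piecewise_univ,
    Finset.piecewise_empty]
  simp

section ProdMul

variable {R A A' : Type*} [CommSemiring R] [NonUnitalNonAssocSemiring A] [Module R A]
  [NonUnitalNonAssocSemiring A'] [Module R A']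

theorem LinearMap.mulRight_comp_inl [IsScalarTower R A A] [IsScalarTower R A' A']
    (c : A × A') :
    mulRight R c ∘ₗ inl R A A' = inl R A A' ∘ₗ mulRight R c.1 := by
  ext <;> simp

theorem LinearMap.mulRight_comp_inr [IsScalarTower R A A] [IsScalarTower R A' A']
    (c : A × A') :
    mulRight R c ∘ₗ inr R A A' = inr R A A' ∘ₗ mulRight R c.2 := by
  ext <;> simp

theorem LinearMap.mulLeft_comp_inl [SMulCommClass R A A] [SMulCommClass R A' A']
    (b : A × A') :
    mulLeft R b ∘ₗ inl R A A' = inl R A A' ∘ₗ mulLeft R b.1 := by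
  ext <;> simp

theorem LinearMap.mulLeft_comp_inr [SMulCommClass R A A] [SMulCommClass R A' A']
    (b : A × A') :
    mulLeft R b ∘ₗ inr R A A' = inr R A A' ∘ₗ mulLeft R b.2 := by
  ext <;> simp

end ProdMul

namespace NBracket

variable {k : Type*} [Field k] {A : Type*} [Ring A] [Algebra k A]
  {A' : Type*} [Ring A'] [Algebra k A'] {n : ℕ} {hn : 0 < n}
  {B : Subalgebra k A} {B' : Subalgebra k A'}

theorem ext {E F : NBracket k A n hn B} (h : E.br = F.br) : E = F := by
  cases E; cases F; cases h; rfl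

noncomputable def prodBr (D : NBracket k A n hn B) (D' : NBracket k A' n hn B') :
    MultilinearMap k (fun _ : Fin n => A × A') (PiTensorProduct k fun _ : Fin n => A × A') :=
  (PiTensorProduct.map fun _ => LinearMap.inl k A A').compMultilinearMap
      (D.br.compLinearMap fun _ => LinearMap.fst k A A') +
    (PiTensorProduct.map fun _ => LinearMap.inr k A A').compMultilinearMap
      (D'.br.compLinearMap fun _ => LinearMap.snd k A A')

theorem prodBr_apply (D : NBracket k A n hn B) (D' : NBracket k A' n hn B')
    (v : Fin n → A × A') :
    prodBr D D' v =
      PiTensorProduct.map (fun _ => LinearMap.inl k A A') (D.br fun i => (v i).1) +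
        PiTensorProduct.map (fun _ => LinearMap.inr k A A') (D'.br fun i => (v i).2) :=
  rfl

noncomputable def prod (D : NBracket k A n hn B) (D' : NBracket k A' n hn B') :
    NBracket k (A × A') n hn (B.prod B') where
  br := prodBr D D'
  blin v i hi := by
    rw [Subalgebra.mem_prod] at hi
    rw [prodBr_apply, D.blin _ i hi.1, D'.blin _ i hi.2, map_zero, map_zero, add_zero]
  cyclic v := by
    have h := D.cyclic fun i => (v i).1
    have h' := D'.cyclic fun i => (v i).2
    rw [prodBr_apply, prodBr_apply, h, h', map_zsmul, map_zsmul,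
      PiTensorProduct.map_reindex (fun _ => LinearMap.inl k A A'),
      PiTensorProduct.map_reindex (fun _ => LinearMap.inr k A A'), map_add]
    exact (zsmul_add _ _ _).symm
  deriv v b c := by
    have hfst (x : A × A') : (fun i => (Function.update v ⟨n - 1, by omega⟩ x i).1) =
        Function.update (fun i => (v i).1) ⟨n - 1, by omega⟩ x.1 :=
      Function.comp_update Prod.fst v _ x
    have hsnd (x : A × A') : (fun i => (Function.update v ⟨n - 1, by omega⟩ x i).2) =
        Function.update (fun i => (v i).2) ⟨n - 1, by omega⟩ x.2 :=
      Function.comp_update Prod.snd v _ x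
    rw [prodBr_apply, prodBr_apply, prodBr_apply, hfst, hsnd, hfst, hsnd, hfst, hsnd,
      Prod.fst_mul, Prod.snd_mul, D.deriv, D'.deriv, map_add, map_add, map_add, map_add,
      PiTensorProduct.map_update_id_map _ (LinearMap.mulRight_comp_inl c),
      PiTensorProduct.map_update_id_map _ (LinearMap.mulRight_comp_inr c),
      PiTensorProduct.map_update_id_map _ (LinearMap.mulLeft_comp_inl b),
      PiTensorProduct.map_update_id_map _ (LinearMap.mulLeft_comp_inr b)]
    abel

theorem prodBr_inl (D : NBracket k A n hn B) (D' : NBracket k A' n hn B') (v : Fin n → A) :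
    prodBr D D' (fun i => (v i, 0)) =
      PiTensorProduct.map (fun _ => LinearMap.inl k A A') (D.br v) := by
  rw [prodBr_apply, D'.br.map_coord_zero ⟨0, hn⟩ rfl, map_zero, add_zero]

theorem prodBr_inr (D : NBracket k A n hn B) (D' : NBracket k A' n hn B') (v : Fin n → A') :
    prodBr D D' (fun i => (0, v i)) =
      PiTensorProduct.map (fun _ => LinearMap.inr k A A') (D'.br v) := by
  rw [prodBr_apply, D.br.map_coord_zero ⟨0, hn⟩ rfl, map_zero, zero_add]

theorem prodBr_of_mixed (D : NBracket k A n hn B) (D' : NBracket k A' n hn B')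
    {v : Fin n → A × A'} (h : ∃ i j, i ≠ j ∧ (v i).2 = 0 ∧ (v j).1 = 0) :
    prodBr D D' v = 0 := by
  obtain ⟨i, j, -, hi, hj⟩ := h
  rw [prodBr_apply, D.br.map_coord_zero j hj, D'.br.map_coord_zero i hi, map_zero, map_zero,
    add_zero]

theorem br_eq_prodBr (D : NBracket k A n hn B) (D' : NBracket k A' n hn B')
    (E : NBracket k (A × A') n hn (B.prod B'))
    (hinl : ∀ v : Fin n → A, E.br (fun i => (v i, 0)) =
      PiTensorProduct.map (fun _ => LinearMap.inl k A A') (D.br v))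
    (hinr : ∀ v : Fin n → A', E.br (fun i => (0, v i)) =
      PiTensorProduct.map (fun _ => LinearMap.inr k A A') (D'.br v))
    (hmixed : ∀ v : Fin n → A × A', (∃ i j, i ≠ j ∧ (v i).2 = 0 ∧ (v j).1 = 0) → E.br v = 0) :
    E.br = prodBr D D' := by
  have : Nonempty (Fin n) := ⟨⟨0, hn⟩⟩
  ext v
  rw [E.br.map_prod_eq_of_map_mixed hmixed, hinl, hinr, prodBr_apply]

end NBracket

theorem statement18_general (k : Type*) [Field k]
    (A : Type*) [Ring A] [Algebra k A] (A' : Type*) [Ring A'] [Algebra k A']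
    (B : Subalgebra k A) (B' : Subalgebra k A')
    (n : ℕ) (hn : 0 < n)
    (D : NBracket k A n hn B) (D' : NBracket k A' n hn B') :
    (∃! Dsum : NBracket k (A × A') n hn (B.prod B'),
      (∀ v : Fin n → A, Dsum.br (fun i => ((v i, 0) : A × A')) =
        PiTensorProduct.map (fun _ : Fin n => LinearMap.inl k A A') (D.br v)) ∧
      (∀ v : Fin n → A', Dsum.br (fun i => ((0, v i) : A × A')) =
        PiTensorProduct.map (fun _ : Fin n => LinearMap.inr k A A') (D'.br v)) ∧
      (∀ v : Fin n → A × A',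
        (∃ i j : Fin n, i ≠ j ∧ (v i).2 = 0 ∧ (v j).1 = 0) → Dsum.br v = 0)) ∧
    (∀ Dsum : NBracket k (A × A') n hn (B.prod B'),
      ((∀ v : Fin n → A, Dsum.br (fun i => ((v i, 0) : A × A')) =
        PiTensorProduct.map (fun _ : Fin n => LinearMap.inl k A A') (D.br v)) ∧
      (∀ v : Fin n → A', Dsum.br (fun i => ((0, v i) : A × A')) =
        PiTensorProduct.map (fun _ : Fin n => LinearMap.inr k A A') (D'.br v)) ∧
      (∀ v : Fin n → A × A',
        (∃ i j : Fin n, i ≠ j ∧ (v i).2 = 0 ∧ (v j).1 = 0) → Dsum.br v = 0)) →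
      ∀ v : Fin n → A × A',
        Dsum.br v =
          PiTensorProduct.map (fun _ : Fin n => LinearMap.inl k A A')
            (D.br fun i => (v i).1)
          + PiTensorProduct.map (fun _ : Fin n => LinearMap.inr k A A')
            (D'.br fun i => (v i).2)) := by
  refine ⟨⟨NBracket.prod D D', ⟨NBracket.prodBr_inl D D', NBracket.prodBr_inr D D',
    fun _ => NBracket.prodBr_of_mixed D D'⟩, ?_⟩, ?_⟩
  · rintro E ⟨hinl, hinr, hmixed⟩
    exact NBracket.ext (NBracket.br_eq_prodBr D D' E hinl hinr hmixed)
  · rintro E ⟨hinl, hinr, hmixed⟩ v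
    rw [NBracket.br_eq_prodBr D D' E hinl hinr hmixed, NBracket.prodBr_apply]

/-- Given `B`- and `B'`-linear `n`-brackets on `A` and `A'`, there is
a unique `(B⊕B')`-linear `n`-bracket on `A ⊕ A'` extending both and vanishing on mixed
arguments; it is given by the explicit componentwise formula. -/
theorem statement18 (k : Type*) [Field k] [CharZero k]
    (A : Type*) [Ring A] [Algebra k A] (A' : Type*) [Ring A'] [Algebra k A']
    (B : Subalgebra k A) (B' : Subalgebra k A')
    (n : ℕ) (hn : 0 < n) (hn2 : 2 ≤ n)
    (D : NBracket k A n hn B) (D' : NBracket k A' n hn B') :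
    (∃! Dsum : NBracket k (A × A') n hn (B.prod B'),
      (∀ v : Fin n → A, Dsum.br (fun i => ((v i, 0) : A × A')) =
        PiTensorProduct.map (fun _ : Fin n => LinearMap.inl k A A') (D.br v)) ∧
      (∀ v : Fin n → A', Dsum.br (fun i => ((0, v i) : A × A')) =
        PiTensorProduct.map (fun _ : Fin n => LinearMap.inr k A A') (D'.br v)) ∧
      (∀ v : Fin n → A × A',
        (∃ i j : Fin n, i ≠ j ∧ (v i).2 = 0 ∧ (v j).1 = 0) → Dsum.br v = 0)) ∧
    (∀ Dsum : NBracket k (A × A') n hn (B.prod B'),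
      ((∀ v : Fin n → A, Dsum.br (fun i => ((v i, 0) : A × A')) =
        PiTensorProduct.map (fun _ : Fin n => LinearMap.inl k A A') (D.br v)) ∧
      (∀ v : Fin n → A', Dsum.br (fun i => ((0, v i) : A × A')) =
        PiTensorProduct.map (fun _ : Fin n => LinearMap.inr k A A') (D'.br v)) ∧
      (∀ v : Fin n → A × A',
        (∃ i j : Fin n, i ≠ j ∧ (v i).2 = 0 ∧ (v j).1 = 0) → Dsum.br v = 0)) →
      ∀ v : Fin n → A × A',
        Dsum.br v =
          PiTensorProduct.map (fun _ : Fin n => LinearMap.inl k A A')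
            (D.br fun i => (v i).1)
          + PiTensorProduct.map (fun _ : Fin n => LinearMap.inr k A A')
            (D'.br fun i => (v i).2)) :=
  statement18_general k A A' B B' n hn D D'
end
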